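/- arXiv:2510.08473 — 6 statements merged into one kernel-verified Lean document; each statement's English description precedes it below -/
import Mathlib

section
/- Let V be a real inner product space, let ε ≥ 0, let θ ∈ (0, π/2), and set c′ := ε + √((1 − cos θ + ε)/2). If x, y, z ∈ V are unit vectors with x ≠ y such that |⟨x, y⟩ − cos θ| ≤ ε and |⟨(x − y)/‖x − y‖, z⟩ − c′| ≤ ε, then ‖x − y − z‖ ≤ 1. -/
open scoped RealInnerProductSpace

/-- If `x, y, z` are unit vectors with `x ≠ y`, `|⟨x,y⟩ − cos θ| ≤ ε`, and
`|⟨(x−y)/‖x−y‖, z⟩ − c′| ≤ ε` with `c′ = ε + √((1 − cos θ + ε)/2)`, then `‖x − y − z‖ ≤ 1`. -/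
theorem norm_sub_sub_le_one_of_approx {V : Type*} [NormedAddCommGroup V] [InnerProductSpace ℝ V]
    (ε : ℝ) (hε : 0 ≤ ε) (θ : ℝ) (hθ : θ ∈ Set.Ioo 0 (Real.pi / 2))
    (c' : ℝ) (hc' : c' = ε + Real.sqrt ((1 - Real.cos θ + ε) / 2))
    (x y z : V) (hx : ‖x‖ = 1) (hy : ‖y‖ = 1) (hz : ‖z‖ = 1) (hxy : x ≠ y)
    (h1 : |⟪x, y⟫ - Real.cos θ| ≤ ε)
    (h2 : |⟪‖x - y‖⁻¹ • (x - y), z⟫ - c'| ≤ ε) :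
    ‖x - y - z‖ ≤ 1 := by
  have hd0 : (0:ℝ) < ‖x - y‖ := norm_pos_iff.mpr (sub_ne_zero.mpr hxy)
  set d := ‖x - y‖ with hd
  have hS0 : (0:ℝ) ≤ (1 - Real.cos θ + ε) / 2 := by
    have := Real.cos_le_one θ; linarith
  set s := Real.sqrt ((1 - Real.cos θ + ε) / 2) with hs
  have hs0 : 0 ≤ s := Real.sqrt_nonneg _
  have hs2 : s ^ 2 = (1 - Real.cos θ + ε) / 2 := Real.sq_sqrt hS0
  have hinner : ⟪(d:ℝ)⁻¹ • (x - y), z⟫ = d⁻¹ * ⟪x - y, z⟫ := real_inner_smul_left _ _ _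
  have h2' : s ≤ d⁻¹ * ⟪x - y, z⟫ := by
    have := abs_sub_le_iff.mp h2
    rw [hinner] at this
    have hle := this.2
    rw [hc'] at hle
    linarith
  have hd2 : d ^ 2 = 2 - 2 * ⟪x, y⟫ := by
    have := @norm_sub_sq_real V _ _ x y
    rw [hx, hy] at this
    rw [hd]; nlinarith [this]
  have hcos : Real.cos θ - ε ≤ ⟪x, y⟫ := by
    have := abs_sub_le_iff.mp h1; linarith [this.1, this.2]
  have hds : d ≤ 2 * s := by
    nlinarith [hd2, hs2, hd0, hs0]
  have hkey : d ^ 2 / 2 ≤ ⟪x - y, z⟫ := by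
    have h3 : d * s ≤ d * (d⁻¹ * ⟪x - y, z⟫) := by
      exact mul_le_mul_of_nonneg_left h2' hd0.le
    rw [← mul_assoc, mul_inv_cancel₀ hd0.ne', one_mul] at h3
    nlinarith [h3, hds, hd0]
  have hnorm : ‖x - y - z‖ ^ 2 = d ^ 2 - 2 * ⟪x - y, z⟫ + 1 := by
    have := @norm_sub_sq_real V _ _ (x - y) z
    rw [hz] at this
    nlinarith [this]
  nlinarith [norm_nonneg (x - y - z), hnorm, hkey]
end

section
/- Let V be a real inner product space, let ε ≥ 0, and set c′ := ε + √(1/3 + ε/2). If x, y, z ∈ V are unit vectors with x ≠ y such that |⟨x, y⟩ − 1/3| ≤ ε and |⟨(x − y)/‖x − y‖, z⟩ − c′| ≤ ε, then ‖x − y − z‖ ≤ 1. -/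
open scoped RealInnerProductSpace

/-- If `x, y, z` are unit vectors with `x ≠ y`, `|⟨x,y⟩ − 1/3| ≤ ε`, and
`|⟨(x−y)/‖x−y‖, z⟩ − c′| ≤ ε` with `c′ = ε + √(1/3 + ε/2)`, then `‖x − y − z‖ ≤ 1`. -/
theorem norm_sub_sub_le_one_of_approx_third {V : Type*}
    [NormedAddCommGroup V] [InnerProductSpace ℝ V]
    (ε : ℝ) (hε : 0 ≤ ε)
    (c' : ℝ) (hc' : c' = ε + Real.sqrt (1 / 3 + ε / 2))
    (x y z : V) (hx : ‖x‖ = 1) (hy : ‖y‖ = 1) (hz : ‖z‖ = 1) (hxy : x ≠ y)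
    (h1 : |⟪x, y⟫ - 1 / 3| ≤ ε)
    (h2 : |⟪‖x - y‖⁻¹ • (x - y), z⟫ - c'| ≤ ε) :
    ‖x - y - z‖ ≤ 1 := by
  set s := Real.sqrt (1 / 3 + ε / 2) with hs
  have hsnn : 0 ≤ s := Real.sqrt_nonneg _
  have hssq : s ^ 2 = 1 / 3 + ε / 2 := by
    rw [hs, sq, Real.mul_self_sqrt (by linarith)]
  have hd : (0:ℝ) < ‖x - y‖ := by
    rw [norm_pos_iff]; exact sub_ne_zero.mpr hxy
  have hinner : ⟪‖x - y‖⁻¹ • (x - y), z⟫ = ‖x - y‖⁻¹ * ⟪x - y, z⟫ :=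
    real_inner_smul_left _ _ _
  rw [hinner] at h2
  rw [abs_le] at h1 h2
  have h2' : s ≤ ‖x - y‖⁻¹ * ⟪x - y, z⟫ := by
    have := h2.1; rw [hc'] at this; linarith
  have h2'' : s * ‖x - y‖ ≤ ⟪x - y, z⟫ := by
    have := mul_le_mul_of_nonneg_left h2' (le_of_lt hd)
    rw [← mul_assoc, mul_inv_cancel₀ (ne_of_gt hd), one_mul, mul_comm] at this
    exact this
  have hdsq : ‖x - y‖ ^ 2 = 2 - 2 * ⟪x, y⟫ := by
    rw [norm_sub_sq_real, hx, hy]; ring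
  have hdle : ‖x - y‖ ≤ 2 * s := by
    nlinarith [h1.2, hd, hssq, norm_nonneg (x - y)]
  have hkey : ‖x - y - z‖ ^ 2 ≤ 1 := by
    rw [norm_sub_sq_real, hz]
    nlinarith [hd, hssq]
  nlinarith [norm_nonneg (x - y - z), hkey]
end

section
/- Let d ≥ 2 and m ≥ 1 be integers, let θ′, ε ∈ ℝ with ε ≥ 0, fix any unit vector u ∈ S^{d−1}, and set p := σ_d({z ∈ S^{d−1} : |⟨z, u⟩ − cos θ′| ≤ ε}). Let x₁, …, x_m be independent random vectors, each distributed according to σ_d. For distinct i, j with x_i ≠ x_j define N_{ij} := #{k ∈ {1,…,m} \ {i, j} : |⟨(x_i − x_j)/‖x_i − x_j‖, x_k⟩ − cos θ′| ≤ ε}. Then for every real s ≥ 2, Pr[for all distinct i, j with x_i ≠ x_j: N_{ij} ≤ (m−2)·p + s·max((m−2)·p, 1)] ≥ 1 − m²·exp(−s/2). -/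
open MeasureTheory ProbabilityTheory
open scoped RealInnerProductSpace Classical

/-- `σ` is the uniform (normalized rotation-invariant) probability measure on the unit sphere
`S^{d−1} ⊆ ℝ^d`, viewed as a measure on `ℝ^d` concentrated on the sphere. -/
def IsUniformSphereMeasure (d : ℕ) (σ : Measure (EuclideanSpace ℝ (Fin d))) : Prop :=
  IsProbabilityMeasure σ ∧ σ (Metric.sphere (0 : EuclideanSpace ℝ (Fin d)) 1) = 1 ∧
    ∀ O : EuclideanSpace ℝ (Fin d) ≃ₗᵢ[ℝ] EuclideanSpace ℝ (Fin d), Measure.map (⇑O) σ = σ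

/-!
Fix a pair `i ≠ j`. The pair `(x i, x j)` is independent of the other `m - 2` samples, and when
`x i ≠ x j` the direction `(x i - x j) / ‖x i - x j‖` is a unit vector, so by rotation invariance
each other sample falls in the band `|⟪w, z⟫ - cos θ'| ≤ ε` around it with probability exactly `p`.
Conditionally on the pair, `N_{ij}` is therefore a binomial count with `m - 2` trials, and the
Chernoff bound `P(N > B) ≤ e^{-B} E[e^N] ≤ exp(-B + (e - 1)(m - 2)p)` is at most `exp(-s/2)` for
`B = (m - 2)p + s·max((m - 2)p, 1)` and `s ≥ 2`. A union bound over the at most `m²` pairs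
finishes the proof.
-/

open Real Finset

theorem exp_mul_indicator_one {α : Type*} (S : Set α) (t : ℝ) :
    (fun a => exp (t * S.indicator 1 a)) = fun a => 1 + S.indicator (fun _ => exp t - 1) a := by
  ext a
  by_cases ha : a ∈ S <;> simp [ha]

section

variable {Ω E : Type*} [MeasurableSpace Ω] [MeasurableSpace E] {μ : Measure Ω}
  [IsProbabilityMeasure μ]

theorem integrable_exp_mul_indicator_one {S : Set Ω} (hS : MeasurableSet S) (t : ℝ) :
    Integrable (fun ω => exp (t * S.indicator 1 ω)) μ := by
  rw [exp_mul_indicator_one]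
  exact (integrable_const _).add ((integrable_const _).indicator hS)

theorem mgf_indicator_one_le {S : Set Ω} (hS : MeasurableSet S) (t : ℝ) :
    mgf (S.indicator 1) μ t ≤ exp ((exp t - 1) * μ.real S) := by
  rw [mgf, exp_mul_indicator_one, integral_add (integrable_const _)
    ((integrable_const _).indicator hS), integral_indicator_const _ hS]
  simpa [add_comm, mul_comm] using add_one_le_exp ((exp t - 1) * μ.real S)

theorem measureReal_lt_card_filter_le {ι : Type*} [Fintype ι] {X : ι → Ω → E}
    (hX : ∀ k, Measurable (X k)) (hindep : iIndepFun X μ) {A : Set E} (hA : MeasurableSet A)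
    {q : ℝ} (hq : ∀ k, μ.real (X k ⁻¹' A) ≤ q) (B : ℝ) :
    μ.real {ω | B < #{k | X k ω ∈ A}} ≤ exp (-B + (exp 1 - 1) * Fintype.card ι * q) := by
  set Y : ι → Ω → ℝ := fun k => A.indicator 1 ∘ X k
  have hYmeas : ∀ k, Measurable (Y k) := fun k => (measurable_const.indicator hA).comp (hX k)
  have hYindep : iIndepFun Y μ := hindep.comp _ fun _ => measurable_const.indicator hA
  have hcount : ∀ ω, (#{k | X k ω ∈ A} : ℝ) = (∑ k, Y k) ω := fun ω => by
    simp only [natCast_card_filter, Finset.sum_apply, Y, Function.comp_apply, Set.indicator_apply,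
      Pi.one_apply]
  calc μ.real {ω | B < #{k | X k ω ∈ A}}
      ≤ μ.real {ω | B ≤ (∑ k, Y k) ω} :=
        measureReal_mono fun ω hω => by simpa only [Set.mem_ofPred_eq, ← hcount] using hω.le
    _ ≤ exp (-1 * B) * mgf (∑ k, Y k) μ 1 :=
        measure_ge_le_exp_mul_mgf B zero_le_one
          (hYindep.integrable_exp_mul_sum hYmeas fun k _ =>
            integrable_exp_mul_indicator_one (hX k hA) 1)
    _ = exp (-B) * ∏ k, mgf ((X k ⁻¹' A).indicator 1) μ 1 := by
        rw [hYindep.mgf_sum hYmeas, neg_one_mul]; rfl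
    _ ≤ exp (-B) * ∏ _k : ι, exp ((exp 1 - 1) * q) := by
        gcongr with k
        · exact fun _ _ => mgf_nonneg
        · refine (mgf_indicator_one_le (hX k hA) 1).trans ?_
          gcongr
          · linarith [add_one_le_exp 1]
          · exact hq k
    _ = exp (-B + (exp 1 - 1) * Fintype.card ι * q) := by
        rw [prod_const, card_univ, ← exp_nat_mul, ← exp_add]
        ring_nf

theorem one_sub_card_mul_le_measureReal {ι : Type*} [Fintype ι] {s : Set Ω} {t : ι → Set Ω}
    (hst : sᶜ ⊆ ⋃ i, t i) {δ : ℝ} (ht : ∀ i, μ.real (t i) ≤ δ) :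
    1 - Fintype.card ι * δ ≤ μ.real s := by
  have hsplit : 1 ≤ μ.real s + μ.real sᶜ := by
    simpa [Set.union_compl_self] using measureReal_union_le (μ := μ) s sᶜ
  have hcompl : μ.real sᶜ ≤ Fintype.card ι * δ := calc
    μ.real sᶜ ≤ ∑ i, μ.real (t i) := (measureReal_mono hst).trans (measureReal_iUnion_fintype_le _)
    _ ≤ ∑ _i : ι, δ := sum_le_sum fun i _ => ht i
    _ = Fintype.card ι * δ := by rw [sum_const, card_univ, nsmul_eq_mul]
  linarith

theorem measurable_card_filter_mem {ι F : Type*} [Fintype ι] [MeasurableSpace F] {A : F → Set E}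
    (hA : MeasurableSet {p : F × E | p.2 ∈ A p.1}) :
    Measurable fun p : F × (ι → E) => (#{k | p.2 k ∈ A p.1} : ℝ) := by
  simp_rw [natCast_card_filter]
  exact Finset.measurable_sum _ fun k _ => Measurable.ite
    (hA.preimage (measurable_fst.prodMk ((measurable_pi_apply k).comp measurable_snd)))
    measurable_const measurable_const

theorem measureReal_mem_lt_card_filter_le {ι F : Type*} [Fintype ι] [MeasurableSpace F]
    {Z : Ω → F} {X : ι → Ω → E} (hZ : Measurable Z) (hX : ∀ k, Measurable (X k))
    (hZX : IndepFun Z (fun ω k => X k ω) μ) (hindep : iIndepFun X μ)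
    {G : Set F} (hG : MeasurableSet G) {A : F → Set E}
    (hA : MeasurableSet {p : F × E | p.2 ∈ A p.1})
    {q : ℝ} (hq : ∀ z ∈ G, ∀ k, μ.real (X k ⁻¹' A z) ≤ q) (B : ℝ) :
    μ.real {ω | Z ω ∈ G ∧ B < #{k | X k ω ∈ A (Z ω)}} ≤
      exp (-B + (exp 1 - 1) * Fintype.card ι * q) := by
  set W : Ω → ι → E := fun ω k => X k ω
  have hW : Measurable W := measurable_pi_lambda _ hX
  set S : Set (F × (ι → E)) := {p | p.1 ∈ G ∧ B < #{k | p.2 k ∈ A p.1}}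
  have hS : MeasurableSet S :=
    (hG.preimage measurable_fst).inter (measurableSet_lt measurable_const
      (measurable_card_filter_mem hA))
  set C := exp (-B + (exp 1 - 1) * Fintype.card ι * q)
  have hslice : ∀ z, μ.map W (Prod.mk z ⁻¹' S) ≤ ENNReal.ofReal C := by
    intro z
    by_cases hz : z ∈ G
    · have hAz : MeasurableSet (A z) := measurable_prodMk_left hA
      have hpre : W ⁻¹' (Prod.mk z ⁻¹' S) = {ω | B < #{k | X k ω ∈ A z}} := by
        ext ω
        simp [S, W, hz]
      rw [Measure.map_apply hW (measurable_prodMk_left hS), hpre]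
      exact (ENNReal.le_ofReal_iff_toReal_le (measure_ne_top _ _) (exp_pos _).le).2
        (measureReal_lt_card_filter_le hX hindep hAz (hq z hz) B)
    · simp [S, hz]
  have := Measure.isProbabilityMeasure_map (μ := μ) hZ.aemeasurable
  refine ENNReal.toReal_le_of_le_ofReal (exp_pos _).le ?_
  calc μ {ω | Z ω ∈ G ∧ B < #{k | X k ω ∈ A (Z ω)}}
      = μ.map (fun ω => (Z ω, W ω)) S := (Measure.map_apply (hZ.prodMk hW) hS).symm
    _ = ((μ.map Z).prod (μ.map W)) S := by
        rw [(indepFun_iff_map_prod_eq_prod_map_map hZ.aemeasurable hW.aemeasurable).1 hZX]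
    _ = ∫⁻ z, μ.map W (Prod.mk z ⁻¹' S) ∂μ.map Z := Measure.prod_apply hS
    _ ≤ ∫⁻ _, ENNReal.ofReal C ∂μ.map Z := lintegral_mono hslice
    _ = ENNReal.ofReal C := by simp

end

theorem card_filter_compl_pair_subtype {α : Type*} [Fintype α] [DecidableEq α] {i j : α}
    (P : α → Prop) [DecidablePred P] :
    #{k : ({i, j}ᶜ : Finset α) | P k} = #{k | k ≠ i ∧ k ≠ j ∧ P k} := by
  rw [← card_map (Function.Embedding.subtype _)]
  congr 1
  ext k
  simp only [mem_map, mem_filter, mem_univ, true_and, Function.Embedding.coe_subtype,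
    Subtype.exists, mem_compl, mem_insert, mem_singleton, not_or, exists_and_left,
    exists_prop, exists_eq_right_right]
  tauto

namespace IsUniformSphereMeasure

variable {d : ℕ} {σ : Measure (EuclideanSpace ℝ (Fin d))}

theorem ae_norm_eq_one (hσ : IsUniformSphereMeasure d σ) : ∀ᵐ z ∂σ, ‖z‖ = 1 := by
  have := hσ.1
  have hsphere : σ (Metric.sphere 0 1)ᶜ = 0 :=
    (prob_compl_eq_zero_iff Metric.isClosed_sphere.measurableSet).2 hσ.2.1
  filter_upwards [measure_eq_zero_iff_ae_notMem.1 hsphere] with z hz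
  simpa using hz

theorem measure_inner_preimage_eq (hσ : IsUniformSphereMeasure d σ)
    {u w : EuclideanSpace ℝ (Fin d)} (hu : ‖u‖ = 1) (hw : ‖w‖ = 1) {S : Set ℝ}
    (hS : MeasurableSet S) : σ ((⟪w, ·⟫) ⁻¹' S) = σ ((⟪u, ·⟫) ⁻¹' S) := by
  set O := Submodule.reflection (ℝ ∙ (w - u))ᗮ
  have hOw : O w = u := Submodule.reflection_sub (hw.trans hu.symm)
  have hinner : ∀ z, ⟪w, O z⟫ = ⟪u, z⟫ := fun z => by
    rw [← hOw, ← O.inner_map_map, Submodule.reflection_reflection]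
  have hmeas : MeasurableSet ((⟪w, ·⟫) ⁻¹' S) := measurable_const.inner measurable_id hS
  calc σ ((⟪w, ·⟫) ⁻¹' S) = σ.map O ((⟪w, ·⟫) ⁻¹' S) := by rw [hσ.2.2 O]
    _ = σ ((⟪u, ·⟫) ⁻¹' S) := by
      rw [Measure.map_apply O.continuous.measurable hmeas]
      simp only [Set.preimage_preimage, hinner]

theorem measureReal_abs_inner_sub_le_eq
    (hσ : IsUniformSphereMeasure d σ) {u w : EuclideanSpace ℝ (Fin d)} (hu : ‖u‖ = 1)
    (hw : ‖w‖ = 1) (c ε : ℝ) :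
    σ.real {z | |⟪w, z⟫ - c| ≤ ε} = σ.real {z | ‖z‖ = 1 ∧ |⟪z, u⟫ - c| ≤ ε} := by
  have hS : MeasurableSet {t : ℝ | |t - c| ≤ ε} :=
    measurableSet_le (measurable_id.sub_const c).abs measurable_const
  have hinv := hσ.measure_inner_preimage_eq hu hw hS
  simp only [Set.preimage_ofPred_eq] at hinv
  rw [measureReal_def, hinv, measureReal_def]
  congr 1
  refine measure_congr ?_
  filter_upwards [hσ.ae_norm_eq_one] with z hz
  change (|⟪u, z⟫ - c| ≤ ε) = (‖z‖ = 1 ∧ |⟪z, u⟫ - c| ≤ ε)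
  simp [hz, real_inner_comm]

variable {Ω : Type*} [MeasurableSpace Ω] {μ : Measure Ω} [IsProbabilityMeasure μ]

theorem measureReal_pair_lt_card_filter_le {m : ℕ}
    (hσ : IsUniformSphereMeasure d σ) {u : EuclideanSpace ℝ (Fin d)} (hu : ‖u‖ = 1) (c ε : ℝ)
    {x : Fin m → Ω → EuclideanSpace ℝ (Fin d)} (hxmeas : ∀ i, Measurable (x i))
    (hxdist : ∀ i, μ.map (x i) = σ) (hxindep : iIndepFun x μ) {i j : Fin m} (hij : i ≠ j)
    (B : ℝ) :
    μ.real {ω | x i ω ≠ x j ω ∧ B < #{k | k ≠ i ∧ k ≠ j ∧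
        |⟪‖x i ω - x j ω‖⁻¹ • (x i ω - x j ω), x k ω⟫ - c| ≤ ε}} ≤
      exp (-B + (exp 1 - 1) * (m - 2) * σ.real {z | ‖z‖ = 1 ∧ |⟪z, u⟫ - c| ≤ ε}) := by
  set T : Finset (Fin m) := {i, j}ᶜ
  set A : _ × _ → Set (EuclideanSpace ℝ (Fin d)) :=
    fun z => {e | |⟪‖z.1 - z.2‖⁻¹ • (z.1 - z.2), e⟫ - c| ≤ ε}
  have hA : MeasurableSet {p : _ × _ | p.2 ∈ A p.1} := by
    refine measurableSet_le (Measurable.abs (Measurable.sub_const ?_ c)) measurable_const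
    fun_prop
  have hZX : IndepFun (fun ω => (x i ω, x j ω)) (fun ω (k : T) => x k ω) μ :=
    (hxindep.indepFun_finset {i, j} T disjoint_compl_right hxmeas).comp
      (φ := fun y => (y ⟨i, by simp⟩, y ⟨j, by simp⟩)) (ψ := id)
      ((measurable_pi_apply _).prodMk (measurable_pi_apply _)) measurable_id
  have hq : ∀ z ∈ {z : _ × _ | z.1 ≠ z.2}, ∀ k : T, μ.real (x k ⁻¹' A z) ≤
      σ.real {z | ‖z‖ = 1 ∧ |⟪z, u⟫ - c| ≤ ε} := by
    intro z hz k
    have hdir : ‖‖z.1 - z.2‖⁻¹ • (z.1 - z.2)‖ = 1 := by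
      rw [norm_smul, norm_inv, norm_norm, inv_mul_cancel₀ (norm_ne_zero_iff.2 (sub_ne_zero.2 hz))]
    rw [← hσ.measureReal_abs_inner_sub_le_eq hu hdir, ← hxdist k, map_measureReal_apply (hxmeas k)]
    exact measurable_prodMk_left hA
  have hT : (Fintype.card T : ℝ) = m - 2 := by
    rw [Fintype.card_coe, card_compl, card_pair hij, Fintype.card_fin,
      Nat.cast_sub (by omega : 2 ≤ m), Nat.cast_ofNat]
  have hG : MeasurableSet {z : EuclideanSpace ℝ (Fin d) × EuclideanSpace ℝ (Fin d) | z.1 ≠ z.2} :=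
    (measurableSet_eq_fun measurable_fst measurable_snd).compl
  have := measureReal_mem_lt_card_filter_le ((hxmeas i).prodMk (hxmeas j))
    (fun k : T => hxmeas k) hZX (hxindep.precomp Subtype.val_injective) hG hA hq B
  convert this using 5 with ω
  · simp
  · rw [card_filter_compl_pair_subtype (fun k => x k ω ∈ A (x i ω, x j ω))]
    rfl
  · exact hT.symm

end IsUniformSphereMeasure

theorem chernoff_exponent_le {q s : ℝ} (hq : 0 ≤ q) (hs : 2 ≤ s) :
    -(q + s * max q 1) + (exp 1 - 1) * q ≤ -(s / 2) := by
  have he : exp 1 < 2.7182818286 := exp_one_lt_d9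
  rcases le_total q 1 with h | h
  · rw [max_eq_right h]; nlinarith
  · rw [max_eq_left h]; nlinarith

theorem close_to_difference_count_general {d m : ℕ}
    (σ : Measure (EuclideanSpace ℝ (Fin d))) (hσ : IsUniformSphereMeasure d σ)
    (θ' ε : ℝ)
    (u : EuclideanSpace ℝ (Fin d)) (hu : ‖u‖ = 1)
    (p : ℝ) (hp : p = (σ {z | ‖z‖ = 1 ∧ |⟪z, u⟫ - Real.cos θ'| ≤ ε}).toReal)
    {Ω : Type*} [MeasurableSpace Ω] (μ : Measure Ω) [IsProbabilityMeasure μ]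
    (x : Fin m → Ω → EuclideanSpace ℝ (Fin d))
    (hxmeas : ∀ i, Measurable (x i))
    (hxdist : ∀ i, Measure.map (x i) μ = σ)
    (hxindep : iIndepFun x μ)
    (s : ℝ) (hs : 2 ≤ s) :
    1 - (m : ℝ) ^ 2 * Real.exp (-(s / 2)) ≤
      (μ {ω | ∀ i j : Fin m, i ≠ j → x i ω ≠ x j ω →
        ((Finset.univ.filter (fun k : Fin m => k ≠ i ∧ k ≠ j ∧
            |⟪‖x i ω - x j ω‖⁻¹ • (x i ω - x j ω), x k ω⟫ - Real.cos θ'| ≤ ε)).card : ℝ)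
          ≤ ((m : ℝ) - 2) * p + s * max (((m : ℝ) - 2) * p) 1}).toReal := by
  set B := ((m : ℝ) - 2) * p + s * max (((m : ℝ) - 2) * p) 1
  set bad : Fin m × Fin m → Set Ω := fun ij => {ω | x ij.1 ω ≠ x ij.2 ω ∧ B < #{k | k ≠ ij.1 ∧
    k ≠ ij.2 ∧ |⟪‖x ij.1 ω - x ij.2 ω‖⁻¹ • (x ij.1 ω - x ij.2 ω), x k ω⟫ - cos θ'| ≤ ε}}
  have hbad : ∀ ij : {ij : Fin m × Fin m // ij.1 ≠ ij.2}, μ.real (bad ij) ≤ exp (-(s / 2)) := by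
    rintro ⟨⟨i, j⟩, hij⟩
    have hm : (2 : ℝ) ≤ m := by exact_mod_cast (by omega : 2 ≤ m)
    have hq : 0 ≤ ((m : ℝ) - 2) * p := mul_nonneg (by linarith) (hp ▸ ENNReal.toReal_nonneg)
    refine (hσ.measureReal_pair_lt_card_filter_le hu _ ε hxmeas hxdist hxindep hij B).trans ?_
    rw [← measureReal_def] at hp
    rw [← hp, mul_assoc]
    exact exp_le_exp.2 (chernoff_exponent_le hq hs)
  have hpairs : (Fintype.card {ij : Fin m × Fin m // ij.1 ≠ ij.2} : ℝ) ≤ m ^ 2 := by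
    exact_mod_cast (Fintype.card_subtype_le _).trans_eq (by simp [sq])
  refine le_trans ?_ (one_sub_card_mul_le_measureReal (μ := μ) ?_ hbad)
  · gcongr
  · intro ω hω
    simp only [Set.mem_compl_iff, Set.mem_ofPred_eq, not_forall, not_le] at hω
    obtain ⟨i, j, hij, hne, hlt⟩ := hω
    exact Set.mem_iUnion.2 ⟨⟨(i, j), hij⟩, hne, hlt⟩

/-- For `m` i.i.d. uniform samples from `S^{d−1}` (`d ≥ 2`), with probability at least
`1 − m²·exp(−s/2)`, for all distinct `i, j` with `x_i ≠ x_j` the number `N_{ij}` of samples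
`x_k` (`k ∉ {i,j}`) in the approximate cap around `(x_i − x_j)/‖x_i − x_j‖` satisfies
`N_{ij} ≤ (m−2)p + s·max((m−2)p, 1)`. -/
theorem close_to_difference_count {d m : ℕ} (hd : 2 ≤ d) (hm : 1 ≤ m)
    (σ : Measure (EuclideanSpace ℝ (Fin d))) (hσ : IsUniformSphereMeasure d σ)
    (θ' ε : ℝ) (hε : 0 ≤ ε)
    (u : EuclideanSpace ℝ (Fin d)) (hu : ‖u‖ = 1)
    (p : ℝ) (hp : p = (σ {z | ‖z‖ = 1 ∧ |⟪z, u⟫ - Real.cos θ'| ≤ ε}).toReal)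
    {Ω : Type*} [MeasurableSpace Ω] (μ : Measure Ω) [IsProbabilityMeasure μ]
    (x : Fin m → Ω → EuclideanSpace ℝ (Fin d))
    (hxmeas : ∀ i, Measurable (x i))
    (hxdist : ∀ i, Measure.map (x i) μ = σ)
    (hxindep : iIndepFun x μ)
    (s : ℝ) (hs : 2 ≤ s) :
    1 - (m : ℝ) ^ 2 * Real.exp (-(s / 2)) ≤
      (μ {ω | ∀ i j : Fin m, i ≠ j → x i ω ≠ x j ω →
        ((Finset.univ.filter (fun k : Fin m => k ≠ i ∧ k ≠ j ∧
            |⟪‖x i ω - x j ω‖⁻¹ • (x i ω - x j ω), x k ω⟫ - Real.cos θ'| ≤ ε)).card : ℝ)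
          ≤ ((m : ℝ) - 2) * p + s * max (((m : ℝ) - 2) * p) 1}).toReal :=
  close_to_difference_count_general σ hσ θ' ε u hu p hp μ x hxmeas hxdist hxindep s hs
end

section
/- Let d ≥ 2, fix a unit vector u ∈ S^{d−1}, and let x, y, z be independent random vectors, each distributed according to σ_d. Then for all Borel sets A, B ⊆ ℝ: Pr[⟨x, y⟩ ∈ A and x ≠ y and ⟨(x − y)/‖x − y‖, z⟩ ∈ B] = Pr[⟨x, y⟩ ∈ A] · σ_d({w ∈ S^{d−1} : ⟨u, w⟩ ∈ B}). -/
open MeasureTheory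
open scoped RealInnerProductSpace

/-!
Given `x ≠ y`, the vector `v = (x - y)/‖x - y‖` is a unit vector, and a reflection of `ℝ^d`
carries `v` to `u`; by rotation invariance `⟪v, z⟫` and `⟪u, z⟫` have the same law under `σ`.
So the slice of the event over `(x, y)` has the constant measure `σ {w | ⟪u, w⟫ ∈ B}` on
`{⟪x, y⟫ ∈ A, x ≠ y}` and is empty elsewhere, and Tonelli factors the probability. The diagonal
`x = y` is null: for `d ≥ 2` the spheres are infinite and connected, and rotation invariance gives
all points of a sphere the same mass, which must therefore vanish.
-/

open Set
open scoped ENNReal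

namespace MeasureTheory.Measure

variable {α β : Type*} [MeasurableSpace α] [MeasurableSpace β]

theorem prod_diagonal_eq_zero [MeasurableEq α] (μ ν : Measure α) [SFinite ν]
    [NullSingletonClass ν] : μ.prod ν (diagonal α) = 0 := by
  have hslice : ∀ a, Prod.mk a ⁻¹' diagonal α = {a} := fun a => by ext; simp [eq_comm]
  simp [prod_apply measurableSet_diagonal, hslice]

theorem prod_apply_eq_mul_of_slice_eq_indicator (μ : Measure α) (ν : Measure β) [SFinite ν]
    {S : Set (α × β)} (hS : MeasurableSet S) {T : Set α} (hT : MeasurableSet T) (c : ℝ≥0∞)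
    (h : ∀ a, ν (Prod.mk a ⁻¹' S) = T.indicator (fun _ => c) a) :
    μ.prod ν S = μ T * c := by
  rw [prod_apply hS, lintegral_congr h, lintegral_indicator_const hT, mul_comm]

end MeasureTheory.Measure

section IsometryInvariant

variable {E : Type*} [NormedAddCommGroup E] [InnerProductSpace ℝ E]

theorem LinearIsometryEquiv.exists_apply_eq_of_norm_eq {u v : E} (h : ‖u‖ = ‖v‖) :
    ∃ O : E ≃ₗᵢ[ℝ] E, O u = v :=
  ⟨_, Submodule.reflection_sub h⟩

variable [MeasurableSpace E] [BorelSpace E] {μ : Measure E}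

theorem measure_preimage_linearIsometryEquiv (hμ : ∀ O : E ≃ₗᵢ[ℝ] E, μ.map O = μ)
    (O : E ≃ₗᵢ[ℝ] E) (s : Set E) : μ (O ⁻¹' s) = μ s :=
  (MeasurePreserving.mk (μa := μ) O.toMeasurableEquiv.measurable (hμ O)).measure_preimage_equiv s

theorem measure_singleton_eq_of_norm_eq (hμ : ∀ O : E ≃ₗᵢ[ℝ] E, μ.map O = μ) {u v : E}
    (h : ‖u‖ = ‖v‖) : μ {u} = μ {v} := by
  obtain ⟨O, rfl⟩ := LinearIsometryEquiv.exists_apply_eq_of_norm_eq h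
  rw [← measure_preimage_linearIsometryEquiv hμ O {O u}]
  congr 1
  ext
  simp

theorem measure_inner_mem_eq_of_norm_eq (hμ : ∀ O : E ≃ₗᵢ[ℝ] E, μ.map O = μ) {u v : E}
    (h : ‖u‖ = ‖v‖) (B : Set ℝ) : μ {w | ⟪u, w⟫ ∈ B} = μ {w | ⟪v, w⟫ ∈ B} := by
  obtain ⟨O, rfl⟩ := LinearIsometryEquiv.exists_apply_eq_of_norm_eq h
  rw [← measure_preimage_linearIsometryEquiv hμ O {w | ⟪O u, w⟫ ∈ B}]
  simp only [preimage_ofPred_eq, LinearIsometryEquiv.inner_map_map]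

theorem measure_inner_smul_inv_norm_sub_mem (hμ : ∀ O : E ≃ₗᵢ[ℝ] E, μ.map O = μ) {u : E}
    (hu : ‖u‖ = 1) {x y : E} (hxy : x ≠ y) (B : Set ℝ) :
    μ {z | ⟪‖x - y‖⁻¹ • (x - y), z⟫ ∈ B} = μ {w | ⟪u, w⟫ ∈ B} :=
  measure_inner_mem_eq_of_norm_eq hμ ((norm_smul_inv_norm (sub_ne_zero.2 hxy)).trans hu.symm) B

theorem nullSingletonClass_of_isometry_invariant [IsFiniteMeasure μ]
    (hμ : ∀ O : E ≃ₗᵢ[ℝ] E, μ.map O = μ)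
    (hE : 1 < Module.rank ℝ E) (h0 : μ {0} = 0) : NullSingletonClass μ where
  measure_singleton p := by
    rcases eq_or_ne p 0 with rfl | hp
    · exact h0
    by_contra hne
    have hinf : (Metric.sphere (0 : E) ‖p‖).Infinite :=
      (isPreconnected_sphere hE 0 ‖p‖).infinite_of_nontrivial
        ⟨p, by simp, -p, by simp, by simpa [eq_neg_iff_add_eq_zero, ← two_smul ℝ] using hp⟩
    refine measure_ne_top μ (Metric.sphere 0 ‖p‖) (hinf.meas_eq_top ⟨μ {p}, hne, fun x hx => ?_⟩)
    rw [measure_singleton_eq_of_norm_eq hμ (by simpa using hx.symm)]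

end IsometryInvariant

theorem IsUniformSphereMeasure.nullSingletonClass {d : ℕ} (hd : 2 ≤ d)
    {σ : Measure (EuclideanSpace ℝ (Fin d))} (hσ : IsUniformSphereMeasure d σ) :
    NullSingletonClass σ := by
  obtain ⟨hprob, hsphere, hinv⟩ := hσ
  have hrank : 1 < Module.rank ℝ (EuclideanSpace ℝ (Fin d)) :=
    Module.one_lt_rank_of_one_lt_finrank (by simp; omega)
  have hnull : σ (Metric.sphere 0 1)ᶜ = 0 :=
    (prob_compl_eq_zero_iff Metric.isClosed_sphere.measurableSet).2 hsphere
  exact nullSingletonClass_of_isometry_invariant hinv hrank (measure_mono_null (by simp) hnull)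

/-- For `x, y, z` i.i.d. uniform on `S^{d−1}` (`d ≥ 2`), a fixed unit vector `u`, and Borel
sets `A, B ⊆ ℝ`:
`Pr[⟨x,y⟩ ∈ A ∧ x ≠ y ∧ ⟨(x−y)/‖x−y‖, z⟩ ∈ B] = Pr[⟨x,y⟩ ∈ A] · σ_d({w : ⟨u,w⟩ ∈ B})`. -/
theorem inner_diff_factorization {d : ℕ} (hd : 2 ≤ d)
    (σ : Measure (EuclideanSpace ℝ (Fin d))) (hσ : IsUniformSphereMeasure d σ)
    (u : EuclideanSpace ℝ (Fin d)) (hu : ‖u‖ = 1)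
    (A B : Set ℝ) (hA : MeasurableSet A) (hB : MeasurableSet B) :
    (σ.prod (σ.prod σ))
        {q : EuclideanSpace ℝ (Fin d) ×
            EuclideanSpace ℝ (Fin d) × EuclideanSpace ℝ (Fin d) |
          ⟪q.1, q.2.1⟫ ∈ A ∧ q.1 ≠ q.2.1 ∧
            ⟪‖q.1 - q.2.1‖⁻¹ • (q.1 - q.2.1), q.2.2⟫ ∈ B} =
      (σ.prod σ) {q : EuclideanSpace ℝ (Fin d) × EuclideanSpace ℝ (Fin d) | ⟪q.1, q.2⟫ ∈ A} *
        σ {w | ⟪u, w⟫ ∈ B} := by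
  have := hσ.1
  have := hσ.nullSingletonClass hd
  have hS : MeasurableSet {q : EuclideanSpace ℝ (Fin d) ×
      EuclideanSpace ℝ (Fin d) × EuclideanSpace ℝ (Fin d) |
        ⟪q.1, q.2.1⟫ ∈ A ∧ q.1 ≠ q.2.1 ∧ ⟪‖q.1 - q.2.1‖⁻¹ • (q.1 - q.2.1), q.2.2⟫ ∈ B} := by
    measurability
  set T := {q : EuclideanSpace ℝ (Fin d) × EuclideanSpace ℝ (Fin d) | ⟪q.1, q.2⟫ ∈ A} \
    diagonal _
  have hT : MeasurableSet T := by measurability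
  have hslice : ∀ p : EuclideanSpace ℝ (Fin d) × EuclideanSpace ℝ (Fin d),
      σ {z | ⟪p.1, p.2⟫ ∈ A ∧ p.1 ≠ p.2 ∧ ⟪‖p.1 - p.2‖⁻¹ • (p.1 - p.2), z⟫ ∈ B} =
        T.indicator (fun _ => σ {w | ⟪u, w⟫ ∈ B}) p := by
    intro p
    by_cases hp : p ∈ T
    · rw [indicator_of_mem hp]
      obtain ⟨hpA : ⟪p.1, p.2⟫ ∈ A, hpne : p.1 ≠ p.2⟩ := hp
      simp only [hpA, hpne, ne_eq, not_false_eq_true, true_and]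
      exact measure_inner_smul_inv_norm_sub_mem hσ.2.2 hu hpne B
    · rw [indicator_of_notMem hp, ← measure_empty (μ := σ)]
      congr 1
      ext z
      simp only [T, mem_sdiff, mem_ofPred_eq, mem_diagonal_iff] at hp ⊢
      tauto
  rw [← (measurePreserving_prodAssoc σ σ σ).measure_preimage_equiv,
    Measure.prod_apply_eq_mul_of_slice_eq_indicator _ _
      (hS.preimage MeasurableEquiv.prodAssoc.measurable) hT _ hslice,
    measure_sdiff_null (Measure.prod_diagonal_eq_zero σ σ)]
end

section
/- Let d ≥ 2 and m ≥ 3 be integers, let θ, θ′ ∈ ℝ and ε ≥ 0, fix a unit vector u ∈ S^{d−1}, and let x₁, …, x_m be independent random vectors, each distributed according to σ_d. Set p := (σ_d ⊗ σ_d)({(x, y) : |⟨x, y⟩ − cos θ| ≤ ε}) and p′ := σ_d({z : |⟨z, u⟩ − cos θ′| ≤ ε}). Let Z be the number of triples (i, j, k) of pairwise distinct indices in {1, …, m} such that x_i ≠ x_j, |⟨x_i, x_j⟩ − cos θ| ≤ ε, and |⟨(x_i − x_j)/‖x_i − x_j‖, x_k⟩ − cos θ′| ≤ ε. Then E[Z]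 = m(m−1)(m−2)·p·p′. -/
open MeasureTheory ProbabilityTheory
open scoped RealInnerProductSpace Classical

/-
Summing indicators, `E[Z]` is the sum over the `m(m-1)(m-2)` ordered triples of distinct
indices of the probability that `(x_i, x_j, x_k)` is a solution, and by independence each triple
has law `σ ⊗ σ ⊗ σ`. Integrate over `(x_i, x_j)` first. A rotation-invariant measure gives equal
mass to all points of a sphere, which is infinite in dimension `≥ 2`, so `σ` has no atoms and
`x_i ≠ x_j` almost surely. Off the diagonal `v = (x_i - x_j)/‖x_i - x_j‖` is a unit vector, and
by rotation invariance the law of `⟪v, z⟫` under `σ` is the same for every unit vector `v`, so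
the inner integral is `p′` whenever the outer condition holds.
-/

section RotationInvariant

variable {E : Type*} [NormedAddCommGroup E] [InnerProductSpace ℝ E]

theorem exists_linearIsometryEquiv_apply_eq {a b : E} (h : ‖a‖ = ‖b‖) :
    ∃ O : E ≃ₗᵢ[ℝ] E, O a = b :=
  ⟨(ℝ ∙ (a - b))ᗮ.reflection, Submodule.reflection_sub h⟩

theorem Metric.sphere_zero_norm_infinite (hE : 1 < Module.rank ℝ E) {a : E} (ha : a ≠ 0) :
    (Metric.sphere (0 : E) ‖a‖).Infinite := by
  refine (isPreconnected_sphere hE 0 ‖a‖).infinite_of_nontrivial ⟨a, by simp, -a, by simp, ?_⟩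
  rw [ne_eq, eq_neg_iff_add_eq_zero, ← two_smul ℝ]
  simp [ha]

variable [MeasurableSpace E] [BorelSpace E] {σ : Measure E}

theorem measure_singleton_eq_of_norm_eq_s12 (hσ : ∀ O : E ≃ₗᵢ[ℝ] E, σ.map O = σ) {a b : E}
    (h : ‖a‖ = ‖b‖) : σ {a} = σ {b} := by
  obtain ⟨O, rfl⟩ := exists_linearIsometryEquiv_apply_eq h
  conv_rhs => rw [← hσ O, Measure.map_apply O.continuous.measurable (measurableSet_singleton _),
    ← Set.image_singleton, O.injective.preimage_image]

theorem map_inner_left_eq_of_norm_eq (hσ : ∀ O : E ≃ₗᵢ[ℝ] E, σ.map O = σ) {u v : E}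
    (h : ‖u‖ = ‖v‖) : σ.map (⟪u, ·⟫) = σ.map (⟪v, ·⟫) := by
  obtain ⟨O, rfl⟩ := exists_linearIsometryEquiv_apply_eq h
  conv_rhs => rw [← hσ O]
  have hinner : Measurable (⟪O u, ·⟫) := (continuous_const.inner continuous_id).measurable
  rw [Measure.map_map hinner O.continuous.measurable]
  simp [Function.comp_def]

theorem measure_singleton_eq_zero_of_ne_zero [IsFiniteMeasure σ] (hE : 1 < Module.rank ℝ E)
    (hσ : ∀ O : E ≃ₗᵢ[ℝ] E, σ.map O = σ) {a : E} (ha : a ≠ 0) : σ {a} = 0 := by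
  by_contra h0
  refine measure_ne_top σ _ ((Metric.sphere_zero_norm_infinite hE ha).meas_eq_top ⟨σ {a}, h0, ?_⟩)
  intro b hb
  rw [measure_singleton_eq_of_norm_eq_s12 hσ (mem_sphere_zero_iff_norm.mp hb)]

theorem nullSingletonClass_of_ae_norm_eq_one [IsFiniteMeasure σ] (hE : 1 < Module.rank ℝ E)
    (hσ : ∀ O : E ≃ₗᵢ[ℝ] E, σ.map O = σ) (hsph : ∀ᵐ z ∂σ, ‖z‖ = 1) : NullSingletonClass σ where
  measure_singleton a := by
    rcases eq_or_ne a 0 with rfl | ha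
    · exact measure_mono_null (fun z hz => by simp_all) (ae_iff.mp hsph)
    · exact measure_singleton_eq_zero_of_ne_zero hE hσ ha

end RotationInvariant

theorem MeasureTheory.Measure.prod_diagonal_eq_zero_s12 {α : Type*} [MeasurableSpace α]
    [MeasurableEq α] (μ ν : Measure α) [SFinite ν] [NullSingletonClass ν] :
    (μ.prod ν) (Set.diagonal α) = 0 := by
  have hslice (a : α) : Prod.mk a ⁻¹' Set.diagonal α = {a} := by
    ext b; simp [eq_comm]
  simp [Measure.prod_apply measurableSet_diagonal, hslice]

theorem MeasureTheory.integral_card_filter {Ω ι : Type*} [MeasurableSpace Ω] {μ : Measure Ω}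
    [IsFiniteMeasure μ] [Fintype ι] (P : ι → Ω → Prop) [∀ ω, DecidablePred (P · ω)]
    (hP : ∀ i, MeasurableSet {ω | P i ω}) :
    ∫ ω, ((Finset.univ.filter (P · ω)).card : ℝ) ∂μ = ∑ i, μ.real {ω | P i ω} := by
  have hcount (ω : Ω) : ((Finset.univ.filter (P · ω)).card : ℝ)
      = ∑ i, {ω | P i ω}.indicator (fun _ => (1 : ℝ)) ω := by
    simp [Set.indicator_apply]
  simp_rw [hcount]
  rw [integral_finsetSum _ fun i _ => (integrable_const (1 : ℝ)).indicator (hP i)]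
  exact Finset.sum_congr rfl fun i _ => integral_indicator_one (hP i)

theorem ProbabilityTheory.iIndepFun.map_prodMk_prodMk_eq {Ω ι β : Type*} [MeasurableSpace Ω]
    [MeasurableSpace β] {μ : Measure Ω} [IsFiniteMeasure μ] {X : ι → Ω → β}
    (hX : iIndepFun X μ) (hXm : ∀ i, Measurable (X i)) {i j k : ι}
    (hij : i ≠ j) (hik : i ≠ k) (hjk : j ≠ k) :
    μ.map (fun ω => ((X i ω, X j ω), X k ω))
      = ((μ.map (X i)).prod (μ.map (X j))).prod (μ.map (X k)) := by
  rw [(indepFun_iff_map_prod_eq_prod_map_map ((hXm i).prodMk (hXm j)).aemeasurable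
      (hXm k).aemeasurable).1 (hX.indepFun_prodMk hXm i j k hik hjk),
    (indepFun_iff_map_prod_eq_prod_map_map (hXm i).aemeasurable (hXm j).aemeasurable).1
      (hX.indepFun hij)]

theorem card_filter_pairwise_ne_triples (α : Type*) [Fintype α] [DecidableEq α] :
    (Finset.univ.filter (fun t : α × α × α => t.1 ≠ t.2.1 ∧ t.1 ≠ t.2.2 ∧ t.2.1 ≠ t.2.2)).card
      = (Fintype.card α).descFactorial 3 := by
  rw [← Fintype.card_fin 3, ← Fintype.card_embedding_eq, ← Finset.card_univ]
  refine Finset.card_bij' (fun t ht => ⟨![t.1, t.2.1, t.2.2], ?_⟩) (fun f _ => (f 0, f 1, f 2))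
    (by simp) ?_ ?_ ?_
  · intro a b hab
    simp only [Finset.mem_filter, Finset.mem_univ, true_and] at ht
    fin_cases a <;> fin_cases b <;> simp_all [eq_comm]
  · intro f _
    simp [f.injective.ne]
  · intro t _; rfl
  · intro f _
    ext a
    fin_cases a <;> rfl

theorem Nat.cast_descFactorial_three (S : Type*) [CommRing S] (a : ℕ) :
    (a.descFactorial 3 : S) = a * (a - 1) * (a - 2) := by
  rw [Nat.descFactorial_succ, Nat.cast_mul, Nat.cast_descFactorial_two]
  rcases a with _ | _ | a
  · simp
  · simp
  · push_cast [show a + 1 + 1 - 2 = a by omega]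
    ring

theorem MeasureTheory.measure_setOf_and_of_ae {α : Type*} [MeasurableSpace α] {μ : Measure α}
    {Q P : α → Prop} (hQ : ∀ᵐ a ∂μ, Q a) : μ {a | Q a ∧ P a} = μ {a | P a} :=
  measure_congr (hQ.mono fun _ ha => propext (and_iff_right ha))

section SolutionTriple

variable {E : Type*} [NormedAddCommGroup E] [InnerProductSpace ℝ E]

def IsSolutionTriple (c c' ε : ℝ) (a b z : E) : Prop :=
  a ≠ b ∧ |⟪a, b⟫ - c| ≤ ε ∧ |⟪‖a - b‖⁻¹ • (a - b), z⟫ - c'| ≤ ε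

variable [MeasurableSpace E] [BorelSpace E] [SecondCountableTopology E]

theorem measurableSet_setOf_isSolutionTriple (c c' ε : ℝ) :
    MeasurableSet {q : (E × E) × E | IsSolutionTriple c c' ε q.1.1 q.1.2 q.2} := by
  unfold IsSolutionTriple
  measurability

variable {σ : Measure E} [SFinite σ] [NullSingletonClass σ]

theorem prod_prod_setOf_isSolutionTriple (hσ : ∀ O : E ≃ₗᵢ[ℝ] E, σ.map O = σ) {u : E}
    (hu : ‖u‖ = 1) (c c' ε : ℝ) :
    ((σ.prod σ).prod σ) {q | IsSolutionTriple c c' ε q.1.1 q.1.2 q.2}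
      = (σ.prod σ) {q | |⟪q.1, q.2⟫ - c| ≤ ε} * σ {z | |⟪u, z⟫ - c'| ≤ ε} := by
  have hA : MeasurableSet {q : E × E | |⟪q.1, q.2⟫ - c| ≤ ε} := by measurability
  have hI : MeasurableSet {r : ℝ | |r - c'| ≤ ε} := by measurability
  have hoff : ∀ᵐ q ∂σ.prod σ, q.1 ≠ q.2 :=
    measure_mono_null (fun q hq => not_not.mp hq) (Measure.prod_diagonal_eq_zero_s12 σ σ)
  have hslice : ∀ᵐ q ∂σ.prod σ,
      σ (Prod.mk q ⁻¹' {q | IsSolutionTriple c c' ε q.1.1 q.1.2 q.2})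
        = {q : E × E | |⟪q.1, q.2⟫ - c| ≤ ε}.indicator (fun _ => σ {z | |⟪u, z⟫ - c'| ≤ ε}) q := by
    filter_upwards [hoff] with q hq
    by_cases hc : |⟪q.1, q.2⟫ - c| ≤ ε
    · set v := ‖q.1 - q.2‖⁻¹ • (q.1 - q.2)
      have hv : ‖v‖ = ‖u‖ := by
        rw [hu, norm_smul, norm_inv, norm_norm, inv_mul_cancel₀ (norm_ne_zero_iff.mpr
          (sub_ne_zero.mpr hq))]
      have hinner (w : E) : Measurable (⟪w, ·⟫) :=
        (continuous_const.inner continuous_id).measurable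
      have hcap := congrArg (fun ν : Measure ℝ => ν {r | |r - c'| ≤ ε})
        (map_inner_left_eq_of_norm_eq hσ hv)
      rw [Measure.map_apply (hinner v) hI, Measure.map_apply (hinner u) hI] at hcap
      simpa [IsSolutionTriple, hq, hc, Set.indicator_of_mem] using hcap
    · simp [IsSolutionTriple, hc]
  rw [Measure.prod_apply (measurableSet_setOf_isSolutionTriple c c' ε), lintegral_congr_ae hslice,
    lintegral_indicator_const hA, mul_comm]

theorem integral_card_solutionTriples (hσ : ∀ O : E ≃ₗᵢ[ℝ] E, σ.map O = σ) {u : E}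
    (hu : ‖u‖ = 1) (c c' ε : ℝ) {Ω ι : Type*} [MeasurableSpace Ω] {μ : Measure Ω}
    [IsFiniteMeasure μ] [Fintype ι] [DecidableEq ι] {X : ι → Ω → E}
    (hXm : ∀ i, Measurable (X i)) (hXσ : ∀ i, μ.map (X i) = σ) (hX : iIndepFun X μ)
    [∀ ω, DecidablePred fun t : ι × ι × ι => t.1 ≠ t.2.1 ∧ t.1 ≠ t.2.2 ∧ t.2.1 ≠ t.2.2 ∧
      IsSolutionTriple c c' ε (X t.1 ω) (X t.2.1 ω) (X t.2.2 ω)] :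
    ∫ ω, ((Finset.univ.filter fun t : ι × ι × ι => t.1 ≠ t.2.1 ∧ t.1 ≠ t.2.2 ∧ t.2.1 ≠ t.2.2 ∧
        IsSolutionTriple c c' ε (X t.1 ω) (X t.2.1 ω) (X t.2.2 ω)).card : ℝ) ∂μ
      = (Fintype.card ι).descFactorial 3 * ((σ.prod σ).real {q | |⟪q.1, q.2⟫ - c| ≤ ε}
        * σ.real {z | |⟪u, z⟫ - c'| ≤ ε}) := by
  have hS := measurableSet_setOf_isSolutionTriple (E := E) c c' ε
  have hY (t : ι × ι × ι) : Measurable fun ω => ((X t.1 ω, X t.2.1 ω), X t.2.2 ω) :=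
    ((hXm _).prodMk (hXm _)).prodMk (hXm _)
  have htriple (t : ι × ι × ι) :
      μ.real {ω | t.1 ≠ t.2.1 ∧ t.1 ≠ t.2.2 ∧ t.2.1 ≠ t.2.2 ∧
        IsSolutionTriple c c' ε (X t.1 ω) (X t.2.1 ω) (X t.2.2 ω)}
      = if t.1 ≠ t.2.1 ∧ t.1 ≠ t.2.2 ∧ t.2.1 ≠ t.2.2 then
          (σ.prod σ).real {q | |⟪q.1, q.2⟫ - c| ≤ ε} * σ.real {z | |⟪u, z⟫ - c'| ≤ ε} else 0 := by
    by_cases ht : t.1 ≠ t.2.1 ∧ t.1 ≠ t.2.2 ∧ t.2.1 ≠ t.2.2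
    · obtain ⟨hij, hik, hjk⟩ := ht
      have hlaw := hX.map_prodMk_prodMk_eq hXm hij hik hjk
      rw [hXσ, hXσ, hXσ] at hlaw
      simp only [hij, hik, hjk, ne_eq, not_false_eq_true, true_and, if_true]
      rw [measureReal_def, measureReal_def, measureReal_def, ← ENNReal.toReal_mul,
        ← prod_prod_setOf_isSolutionTriple hσ hu, ← hlaw, Measure.map_apply (hY t) hS]
      rfl
    · rw [if_neg ht]
      convert measureReal_empty (μ := μ)
      exact Set.eq_empty_of_forall_notMem fun ω h => ht ⟨h.1, h.2.1, h.2.2.1⟩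
  have hmeas (t : ι × ι × ι) : MeasurableSet {ω | t.1 ≠ t.2.1 ∧ t.1 ≠ t.2.2 ∧ t.2.1 ≠ t.2.2 ∧
        IsSolutionTriple c c' ε (X t.1 ω) (X t.2.1 ω) (X t.2.2 ω)} :=
    (MeasurableSet.const _).inter <| (MeasurableSet.const _).inter <|
      (MeasurableSet.const _).inter (hS.preimage (hY t))
  rw [integral_card_filter _ hmeas, Finset.sum_congr rfl fun t _ => htriple t, Finset.sum_ite,
    Finset.sum_const_zero, add_zero, Finset.sum_const, nsmul_eq_mul,
    card_filter_pairwise_ne_triples]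

end SolutionTriple

theorem expected_number_of_triples_general {d m : ℕ} (hd : 2 ≤ d)
    (θ θ' ε : ℝ)
    (σ : Measure (EuclideanSpace ℝ (Fin d))) (hσ : IsUniformSphereMeasure d σ)
    (u : EuclideanSpace ℝ (Fin d)) (hu : ‖u‖ = 1)
    (p p' : ℝ)
    (hp : p = ((σ.prod σ) {q : EuclideanSpace ℝ (Fin d) × EuclideanSpace ℝ (Fin d) |
      ‖q.1‖ = 1 ∧ ‖q.2‖ = 1 ∧ |⟪q.1, q.2⟫ - Real.cos θ| ≤ ε}).toReal)
    (hp' : p' = (σ {z | ‖z‖ = 1 ∧ |⟪z, u⟫ - Real.cos θ'| ≤ ε}).toReal)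
    {Ω : Type*} [MeasurableSpace Ω] (μ : Measure Ω) [IsProbabilityMeasure μ]
    (x : Fin m → Ω → EuclideanSpace ℝ (Fin d))
    (hxmeas : ∀ i, Measurable (x i))
    (hxdist : ∀ i, Measure.map (x i) μ = σ)
    (hxindep : iIndepFun x μ) :
    ∫ ω, ((Finset.univ.filter (fun t : Fin m × Fin m × Fin m =>
        t.1 ≠ t.2.1 ∧ t.1 ≠ t.2.2 ∧ t.2.1 ≠ t.2.2 ∧
        x t.1 ω ≠ x t.2.1 ω ∧
        |⟪x t.1 ω, x t.2.1 ω⟫ - Real.cos θ| ≤ ε ∧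
        |⟪‖x t.1 ω - x t.2.1 ω‖⁻¹ • (x t.1 ω - x t.2.1 ω), x t.2.2 ω⟫ - Real.cos θ'| ≤ ε)).card
          : ℝ) ∂μ
      = m * ((m : ℝ) - 1) * ((m : ℝ) - 2) * p * p' := by
  obtain ⟨hprob, hsph, hinv⟩ := hσ
  have hnorm : ∀ᵐ z ∂σ, ‖z‖ = 1 := by
    have hsphere : {z | ‖z‖ = 1} = Metric.sphere (0 : EuclideanSpace ℝ (Fin d)) 1 := by
      ext; simp
    rw [ae_iff_measure_eq, hsphere, hsph, measure_univ]
    exact (hsphere ▸ Metric.isClosed_sphere.measurableSet).nullMeasurableSet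
  have hrank : 1 < Module.rank ℝ (EuclideanSpace ℝ (Fin d)) := by
    rw [← Module.finrank_eq_rank, finrank_euclideanSpace_fin]; exact_mod_cast hd
  have hσ₀ := nullSingletonClass_of_ae_norm_eq_one hrank hinv hnorm
  have hnorm₂ : ∀ᵐ q ∂σ.prod σ, ‖q.1‖ = 1 ∧ ‖q.2‖ = 1 :=
    (Measure.quasiMeasurePreserving_fst.ae hnorm).and (Measure.quasiMeasurePreserving_snd.ae hnorm)
  have hp₀ : p = (σ.prod σ).real {q | |⟪q.1, q.2⟫ - Real.cos θ| ≤ ε} := by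
    simp only [hp, measureReal_def, ← and_assoc, measure_setOf_and_of_ae hnorm₂]
  have hp'₀ : p' = σ.real {z | |⟪u, z⟫ - Real.cos θ'| ≤ ε} := by
    simp only [hp', measureReal_def, measure_setOf_and_of_ae hnorm, real_inner_comm]
  have hcount := integral_card_solutionTriples hinv hu (Real.cos θ) (Real.cos θ') ε
    hxmeas hxdist hxindep
  rw [Fintype.card_fin, Nat.cast_descFactorial_three, ← hp₀, ← hp'₀] at hcount
  rw [mul_assoc _ p]
  convert hcount using 3
  simp only [IsSolutionTriple]
  -- the two filters now differ only in their `Decidable` instances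
  congr

/-- The expected number of ordered solution triples of the 3-list problem:
`E[Z] = m(m−1)(m−2)·p·p′`, where `Z` counts triples `(i,j,k)` of pairwise distinct indices
with `x_i ≠ x_j`, `|⟨x_i,x_j⟩ − cos θ| ≤ ε`, and `|⟨(x_i−x_j)/‖x_i−x_j‖, x_k⟩ − cos θ′| ≤ ε`. -/
theorem expected_number_of_triples {d m : ℕ} (hd : 2 ≤ d) (hm : 3 ≤ m)
    (θ θ' ε : ℝ) (hε : 0 ≤ ε)
    (σ : Measure (EuclideanSpace ℝ (Fin d))) (hσ : IsUniformSphereMeasure d σ)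
    (u : EuclideanSpace ℝ (Fin d)) (hu : ‖u‖ = 1)
    (p p' : ℝ)
    (hp : p = ((σ.prod σ) {q : EuclideanSpace ℝ (Fin d) × EuclideanSpace ℝ (Fin d) |
      ‖q.1‖ = 1 ∧ ‖q.2‖ = 1 ∧ |⟪q.1, q.2⟫ - Real.cos θ| ≤ ε}).toReal)
    (hp' : p' = (σ {z | ‖z‖ = 1 ∧ |⟪z, u⟫ - Real.cos θ'| ≤ ε}).toReal)
    {Ω : Type*} [MeasurableSpace Ω] (μ : Measure Ω) [IsProbabilityMeasure μ]
    (x : Fin m → Ω → EuclideanSpace ℝ (Fin d))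
    (hxmeas : ∀ i, Measurable (x i))
    (hxdist : ∀ i, Measure.map (x i) μ = σ)
    (hxindep : iIndepFun x μ) :
    ∫ ω, ((Finset.univ.filter (fun t : Fin m × Fin m × Fin m =>
        t.1 ≠ t.2.1 ∧ t.1 ≠ t.2.2 ∧ t.2.1 ≠ t.2.2 ∧
        x t.1 ω ≠ x t.2.1 ω ∧
        |⟪x t.1 ω, x t.2.1 ω⟫ - Real.cos θ| ≤ ε ∧
        |⟪‖x t.1 ω - x t.2.1 ω‖⁻¹ • (x t.1 ω - x t.2.1 ω), x t.2.2 ω⟫ - Real.cos θ'| ≤ ε)).card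
          : ℝ) ∂μ
      = m * ((m : ℝ) - 1) * ((m : ℝ) - 2) * p * p' :=
  expected_number_of_triples_general hd θ θ' ε σ hσ u hu p p' hp hp' μ x hxmeas hxdist hxindep
end

section
/- There exists an absolute constant C > 0 with the following property. Let d ≥ 2 and m ≥ 3 be integers, let θ, θ′ ∈ ℝ and ε ≥ 0, fix a unit vector u ∈ S^{d−1}, and let x₁, …, x_m be independent random vectors, each distributed according to σ_d. Set p := (σ_d ⊗ σ_d)({(x, y) : |⟨x, y⟩ − cos θ| ≤ ε}) and p′ := σ_d({z : |⟨z, u⟩ − cos θ′| ≤ ε}). Let Z be the number of triples (i, j, k) of pairwise distinct indices in {1, …, m} such that x_i ≠ x_j, |⟨x_i, x_j⟩ − cos θ| ≤ ε, and |⟨(x_i − x_j)/‖x_i − x_j‖, x_k⟩ − cos θ′| ≤ ε. Then Var(Z) ≤ C·(m³·p·p′ + m⁴·p²·p′ + m⁴·p·p′² + m⁵·p²·p′²). -/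
open MeasureTheory ProbabilityTheory
open scoped RealInnerProductSpace Classical

/-!
Write `Z = ∑ₜ 𝟙_{A_t}` over ordered triples `t` of distinct indices, so that
`Var Z = ∑_{t,s} (P(A_t ∩ A_s) - P(A_t) P(A_s))`. Conditioning on the coordinates indexed by `t`
makes a term vanish when `s` shares no index with `t`, and otherwise bounds it by `P(A_t) K`,
where `K` bounds the probability of `A_s` with the shared coordinates frozen at unit vectors.
By rotation invariance all bands `{z | |⟪v, z⟫ - c| ≤ ε}` with `‖v‖ = 1` have the same mass,
which is `p` for `c = cos θ` and `p'` for `c = cos θ'`. Fubini then gives `P(A_t) ≤ p p'`, and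
`K ≤ 1`, `p + p'` or `p p'` according as `s` has zero, one or two indices outside `t`. For each
`t` there are at most `27`, `27 m` and `27 m²` triples `s` of these three kinds.
-/

open scoped ENNReal
open Set

namespace MeasureTheory.Measure

lemma prod_le_mul_of_section_le {α β : Type*} [MeasurableSpace α] [MeasurableSpace β]
    (ρ : Measure α) (τ : Measure β) [SFinite τ] {A : Set α} {S : Set (α × β)}
    (hA : MeasurableSet A) (hS : MeasurableSet S) (hSA : S ⊆ A ×ˢ univ) {K : ℝ≥0∞}
    (hK : ∀ᵐ a ∂ρ, a ∈ A → τ (Prod.mk a ⁻¹' S) ≤ K) :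
    ρ.prod τ S ≤ ρ A * K := by
  rw [Measure.prod_apply hS, mul_comm, ← lintegral_indicator_const hA]
  refine lintegral_mono_ae (hK.mono fun a ha => ?_)
  by_cases h : a ∈ A
  · simpa [h] using ha h
  · have : Prod.mk a ⁻¹' S = ∅ := eq_empty_of_forall_notMem fun b hb => h (hSA hb).1
    simp [this, h]

end MeasureTheory.Measure

lemma MeasureTheory.MeasurePreserving.toReal_measure_preimage_le {α β : Type*}
    [MeasurableSpace α] [MeasurableSpace β] {μa : Measure α} {μb : Measure β} {f : α → β}
    (hf : MeasurePreserving f μa μb) {B : Set β} (hB : MeasurableSet B) {K : ℝ≥0∞}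
    (hK : μb B ≤ K) (hKt : K ≠ ∞) : (μa (f ⁻¹' B)).toReal ≤ K.toReal :=
  ENNReal.toReal_mono hKt ((hf.measure_preimage hB.nullMeasurableSet).trans_le hK)

namespace ProbabilityTheory

variable {Ω α β : Type*} [MeasurableSpace Ω] [MeasurableSpace α] [MeasurableSpace β]
  {μ : Measure Ω}

lemma IndepFun.measure_inter_preimage_le [IsFiniteMeasure μ] {X : Ω → α} {Y : Ω → β}
    (hXY : IndepFun X Y μ) (hX : Measurable X) (hY : Measurable Y) {A : Set α}
    {S : Set (α × β)} (hA : MeasurableSet A) (hS : MeasurableSet S) {K : ℝ≥0∞}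
    (hK : ∀ᵐ ω ∂μ, X ω ∈ A → μ {ω' | (X ω, Y ω') ∈ S} ≤ K) :
    μ (X ⁻¹' A ∩ (fun ω => (X ω, Y ω)) ⁻¹' S) ≤ μ (X ⁻¹' A) * K := by
  have hAS : MeasurableSet (A ×ˢ univ ∩ S) := (hA.prod .univ).inter hS
  have hsec : Measurable fun a => μ.map Y (Prod.mk a ⁻¹' S) :=
    measurable_measure_prodMk_left hS
  calc μ (X ⁻¹' A ∩ (fun ω => (X ω, Y ω)) ⁻¹' S)
      = (μ.map X).prod (μ.map Y) (A ×ˢ univ ∩ S) := by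
        rw [← (indepFun_iff_map_prod_eq_prod_map_map hX.aemeasurable hY.aemeasurable).1 hXY,
          Measure.map_apply (hX.prodMk hY) hAS]
        congr 1
        ext ω
        simp
    _ ≤ μ.map X A * K := by
        refine Measure.prod_le_mul_of_section_le _ _ hA hAS inter_subset_left ?_
        have hK' : ∀ᵐ a ∂μ.map X, a ∈ A → μ.map Y (Prod.mk a ⁻¹' S) ≤ K := by
          refine (ae_map_iff hX.aemeasurable (measurableSet_setOfPred.2
            ((measurableSet_setOfPred.1 hA).imp (measurableSet_setOfPred.1
              (measurableSet_le hsec measurable_const))))).2 ?_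
          filter_upwards [hK] with ω hω hωA
          rw [Measure.map_apply hY (measurable_prodMk_left hS)]
          exact hω hωA
        exact hK'.mono fun a h ha => (measure_mono fun b hb => hb.2).trans (h ha)
    _ = μ (X ⁻¹' A) * K := by rw [Measure.map_apply hX hA]

/-- `μ {ω' | T.piecewise (x · ω) (x · ω') ∈ R}` is the probability of `R` conditionally on the
coordinates in `T`, which are all that `Q` depends on. -/
lemma iIndepFun.measure_inter_le_of_piecewise {ι : Type*} [Fintype ι] [Zero β]
    [IsFiniteMeasure μ] {x : ι → Ω → β} (hxm : ∀ i, Measurable (x i))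
    (hind : iIndepFun x μ) (T : Finset ι)
    {Q R : Set (ι → β)} (hQ : MeasurableSet Q) (hR : MeasurableSet R)
    (hQT : ∀ y y', (∀ i ∈ T, y i = y' i) → y ∈ Q → y' ∈ Q) {K : ℝ≥0∞}
    (hK : ∀ᵐ ω ∂μ, (fun i => x i ω) ∈ Q →
      μ {ω' | T.piecewise (fun i => x i ω) (fun i => x i ω') ∈ R} ≤ K) :
    μ ({ω | (fun i => x i ω) ∈ Q} ∩ {ω | (fun i => x i ω) ∈ R}) ≤
      μ {ω | (fun i => x i ω) ∈ Q} * K := by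
  let X : Ω → ι → β := fun ω => T.piecewise (fun i => x i ω) 0
  let Y : Ω → ι → β := fun ω => T.piecewise 0 (fun i => x i ω)
  have hXY : IndepFun X Y μ := by
    have h := (hind.indepFun_finset T Tᶜ disjoint_compl_right hxm).comp
      (φ := fun g i => if h : i ∈ T then g ⟨i, h⟩ else 0)
      (ψ := fun g i => if h : i ∈ Tᶜ then g ⟨i, h⟩ else 0)
      (measurable_pi_iff.2 fun i => by split_ifs <;> fun_prop)
      (measurable_pi_iff.2 fun i => by split_ifs <;> fun_prop)
    convert h using 1 <;> ext ω i <;> by_cases hi : i ∈ T <;> simp [X, Y, hi]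
  have hX : Measurable X := measurable_pi_iff.2 fun i => by
    by_cases hi : i ∈ T <;> simp [X, hi, hxm i]
  have hY : Measurable Y := measurable_pi_iff.2 fun i => by
    by_cases hi : i ∈ T <;> simp [Y, hi, hxm i]
  have hXQ (ω : Ω) : X ω ∈ Q ↔ (fun i => x i ω) ∈ Q :=
    ⟨hQT _ _ fun i hi => by simp [X, hi], hQT _ _ fun i hi => by simp [X, hi]⟩
  have hpiece (ω ω' : Ω) :
      T.piecewise (X ω) (Y ω') = T.piecewise (fun i => x i ω) (fun i => x i ω') := by
    ext i; by_cases hi : i ∈ T <;> simp [X, Y, hi]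
  have hS : MeasurableSet {p : (ι → β) × (ι → β) | T.piecewise p.1 p.2 ∈ R} :=
    hR.preimage (measurable_pi_iff.2 fun i => by
      by_cases hi : i ∈ T <;> simp only [Finset.piecewise, hi, if_true, if_false] <;> fun_prop)
  calc μ ({ω | (fun i => x i ω) ∈ Q} ∩ {ω | (fun i => x i ω) ∈ R})
      = μ (X ⁻¹' Q ∩ (fun ω => (X ω, Y ω)) ⁻¹' {p | T.piecewise p.1 p.2 ∈ R}) := by
        congr 1; ext ω; simp [hXQ, hpiece, Finset.piecewise_same]
    _ ≤ μ (X ⁻¹' Q) * K := hXY.measure_inter_preimage_le hX hY hQ hS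
        (hK.mono fun ω h hω => by simpa [hpiece] using h ((hXQ ω).1 hω))
    _ = μ {ω | (fun i => x i ω) ∈ Q} * K := by
        congr 2; ext ω; exact hXQ ω

lemma variance_sum_indicator_one {ι : Type*} [Fintype ι] [IsProbabilityMeasure μ]
    {A : ι → Set Ω} (hA : ∀ i, MeasurableSet (A i)) :
    Var[fun ω => ∑ i, (A i).indicator 1 ω; μ] =
      ∑ i, ∑ j, (μ.real (A i ∩ A j) - μ.real (A i) * μ.real (A j)) := by
  have hL2 (i : ι) : MemLp ((A i).indicator (1 : Ω → ℝ)) 2 μ := (memLp_const 1).indicator (hA i)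
  rw [variance_fun_sum hL2]
  refine Finset.sum_congr rfl fun i _ => Finset.sum_congr rfl fun j _ => ?_
  rw [covariance_eq_sub (hL2 i) (hL2 j), ← inter_indicator_one,
    integral_indicator_one ((hA i).inter (hA j)), integral_indicator_one (hA i),
    integral_indicator_one (hA j)]

end ProbabilityTheory

namespace ThreeList

section Geometry

variable {E : Type*} [NormedAddCommGroup E] [InnerProductSpace ℝ E]

noncomputable def unitDiff (a b : E) : E := ‖a - b‖⁻¹ • (a - b)

def innerBand (c ε : ℝ) (v : E) : Set E := {z | |⟪v, z⟫ - c| ≤ ε}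

def goodPairs (c ε : ℝ) : Set (E × E) := {q | q.1 ≠ q.2 ∧ q.2 ∈ innerBand c ε q.1}

def solutions (c c' ε : ℝ) : Set ((E × E) × E) :=
  {r | r.1 ∈ goodPairs c ε ∧ r.2 ∈ innerBand c' ε (unitDiff r.1.1 r.1.2)}

lemma norm_unitDiff {a b : E} (h : a ≠ b) : ‖unitDiff a b‖ = 1 := by
  rw [unitDiff, norm_smul, norm_inv, norm_norm,
    inv_mul_cancel₀ (norm_ne_zero_iff.2 (sub_ne_zero.2 h))]

lemma unitDiff_map (O : E ≃ₗᵢ[ℝ] E) (a b : E) : unitDiff (O a) (O b) = O (unitDiff a b) := by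
  simp [unitDiff, ← map_sub]

lemma preimage_innerBand (O : E ≃ₗᵢ[ℝ] E) (c ε : ℝ) (v : E) :
    O ⁻¹' innerBand c ε (O v) = innerBand c ε v := by
  ext z
  simp [innerBand]

lemma map_mem_solutions (O : E ≃ₗᵢ[ℝ] E) {c c' ε : ℝ} {a b z : E} :
    ((O a, O b), O z) ∈ solutions c c' ε ↔ ((a, b), z) ∈ solutions c c' ε := by
  simp [solutions, goodPairs, innerBand, unitDiff_map]

lemma exists_linearIsometryEquiv_apply_eq {v w : E} (h : ‖v‖ = ‖w‖) :
    ∃ O : E ≃ₗᵢ[ℝ] E, O v = w :=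
  ⟨Submodule.reflection (ℝ ∙ (v - w))ᗮ, Submodule.reflection_sub h⟩

variable [MeasurableSpace E] [BorelSpace E] [SecondCountableTopology E]

lemma measurableSet_innerBand (c ε : ℝ) (v : E) : MeasurableSet (innerBand c ε v) :=
  measurableSet_le (by fun_prop) measurable_const

lemma measurableSet_goodPairs (c ε : ℝ) : MeasurableSet (goodPairs (E := E) c ε) :=
  (measurableSet_eq_fun measurable_fst measurable_snd).compl.inter
    (measurableSet_le (by fun_prop : Continuous fun q : E × E => |⟪q.1, q.2⟫ - c|).measurable
      measurable_const)

lemma measurableSet_solutions (c c' ε : ℝ) : MeasurableSet (solutions (E := E) c c' ε) := by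
  have hdiff : Measurable fun q : E × E => unitDiff q.1 q.2 := by
    unfold unitDiff; fun_prop
  refine (measurable_fst (measurableSet_goodPairs c ε)).inter
    (measurableSet_le ?_ measurable_const)
  exact ((continuous_inner.measurable.comp
    ((hdiff.comp measurable_fst).prodMk measurable_snd)).sub_const c').abs

end Geometry

section SphereMeasure

variable {E : Type*} [NormedAddCommGroup E] [InnerProductSpace ℝ E] [MeasurableSpace E]
  {σ : Measure E} {c c' ε : ℝ} {w : E}

lemma measure_unit_inner_eq (hsph : ∀ᵐ z ∂σ, ‖z‖ = 1) :
    σ {z | ‖z‖ = 1 ∧ |⟪z, w⟫ - c| ≤ ε} = σ (innerBand c ε w) := by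
  refine measure_congr (Filter.eventuallyEq_set.2 ?_)
  filter_upwards [hsph] with z hz
  simp [innerBand, hz, real_inner_comm]

variable [BorelSpace E] [SecondCountableTopology E]

lemma measure_innerBand_eq (hrot : ∀ O : E ≃ₗᵢ[ℝ] E, σ.map O = σ) {v : E} (hv : ‖v‖ = 1)
    (hw : ‖w‖ = 1) : σ (innerBand c ε v) = σ (innerBand c ε w) := by
  obtain ⟨O, rfl⟩ := exists_linearIsometryEquiv_apply_eq (hw.trans hv.symm)
  rw [← preimage_innerBand O c ε w, ← Measure.map_apply O.continuous.measurable
    (measurableSet_innerBand c ε _), hrot]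

lemma measure_prod_innerBand [IsProbabilityMeasure σ] (hrot : ∀ O : E ≃ₗᵢ[ℝ] E, σ.map O = σ)
    (hsph : ∀ᵐ z ∂σ, ‖z‖ = 1) (hw : ‖w‖ = 1) :
    σ.prod σ {q | q.2 ∈ innerBand c ε q.1} = σ (innerBand c ε w) := by
  have hS : MeasurableSet {q : E × E | q.2 ∈ innerBand c ε q.1} :=
    measurableSet_le (by fun_prop : Continuous fun q : E × E => |⟪q.1, q.2⟫ - c|).measurable
      measurable_const
  rw [Measure.prod_apply hS]
  change ∫⁻ a, σ (innerBand c ε a) ∂σ = _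
  rw [lintegral_congr_ae (hsph.mono fun a ha => measure_innerBand_eq hrot ha hw),
    lintegral_const, measure_univ, mul_one]

lemma measure_prod_unit_inner_eq [IsProbabilityMeasure σ] (hrot : ∀ O : E ≃ₗᵢ[ℝ] E, σ.map O = σ)
    (hsph : ∀ᵐ z ∂σ, ‖z‖ = 1) (hw : ‖w‖ = 1) :
    σ.prod σ {q | ‖q.1‖ = 1 ∧ ‖q.2‖ = 1 ∧ |⟪q.1, q.2⟫ - c| ≤ ε} = σ (innerBand c ε w) := by
  rw [← measure_prod_innerBand hrot hsph hw]
  refine measure_congr (Filter.eventuallyEq_set.2 ?_)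
  filter_upwards [Measure.quasiMeasurePreserving_fst.ae hsph,
    Measure.quasiMeasurePreserving_snd.ae hsph] with q h1 h2
  simp [innerBand, h1, h2]

lemma measure_goodPairs_le [IsProbabilityMeasure σ] (hrot : ∀ O : E ≃ₗᵢ[ℝ] E, σ.map O = σ)
    (hsph : ∀ᵐ z ∂σ, ‖z‖ = 1) (hw : ‖w‖ = 1) : σ.prod σ (goodPairs c ε) ≤ σ (innerBand c ε w) :=
  (measure_mono fun _ hq => hq.2).trans (measure_prod_innerBand hrot hsph hw).le

lemma measure_solutions_fiber_thd_le (hrot : ∀ O : E ≃ₗᵢ[ℝ] E, σ.map O = σ) (hw : ‖w‖ = 1)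
    (a b : E) : σ {z | ((a, b), z) ∈ solutions c c' ε} ≤ σ (innerBand c' ε w) := by
  by_cases hab : a = b
  · simp [solutions, goodPairs, hab]
  · rw [← measure_innerBand_eq hrot (norm_unitDiff hab) hw]
    exact measure_mono fun _ hz => hz.2

lemma measure_solutions_fiber_snd_le (hrot : ∀ O : E ≃ₗᵢ[ℝ] E, σ.map O = σ) (hw : ‖w‖ = 1)
    {a : E} (ha : ‖a‖ = 1) (z : E) :
    σ {b | ((a, b), z) ∈ solutions c c' ε} ≤ σ (innerBand c ε w) := by
  rw [← measure_innerBand_eq hrot ha hw]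
  exact measure_mono fun _ hb => hb.1.2

lemma measure_solutions_fiber_fst_le (hrot : ∀ O : E ≃ₗᵢ[ℝ] E, σ.map O = σ) (hw : ‖w‖ = 1)
    {b : E} (hb : ‖b‖ = 1) (z : E) :
    σ {a | ((a, b), z) ∈ solutions c c' ε} ≤ σ (innerBand c ε w) := by
  rw [← measure_innerBand_eq hrot hb hw]
  refine measure_mono fun a ha => ?_
  simpa [innerBand, real_inner_comm] using ha.1.2

lemma measure_solutions_le [IsProbabilityMeasure σ] (hrot : ∀ O : E ≃ₗᵢ[ℝ] E, σ.map O = σ)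
    (hsph : ∀ᵐ z ∂σ, ‖z‖ = 1) (hw : ‖w‖ = 1) :
    (σ.prod σ).prod σ (solutions c c' ε) ≤ σ (innerBand c ε w) * σ (innerBand c' ε w) :=
  (Measure.prod_le_mul_of_section_le _ _ (measurableSet_goodPairs c ε)
    (measurableSet_solutions c c' ε) (fun _ hr => ⟨hr.1, trivial⟩)
    (ae_of_all _ fun q _ => measure_solutions_fiber_thd_le hrot hw q.1 q.2)).trans
    (mul_le_mul_left (measure_goodPairs_le hrot hsph hw) _)

lemma measure_solutions_fiber_snd_thd_le [SFinite σ] (hrot : ∀ O : E ≃ₗᵢ[ℝ] E, σ.map O = σ)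
    (hw : ‖w‖ = 1) {a : E} (ha : ‖a‖ = 1) :
    σ.prod σ {q | ((a, q.1), q.2) ∈ solutions c c' ε} ≤
      σ (innerBand c ε w) * σ (innerBand c' ε w) := by
  rw [← measure_innerBand_eq hrot ha hw]
  exact Measure.prod_le_mul_of_section_le _ _ (measurableSet_innerBand c ε a)
    ((measurableSet_solutions c c' ε).preimage (by fun_prop)) (fun _ hq => ⟨hq.1.2, trivial⟩)
    (ae_of_all _ fun b _ => measure_solutions_fiber_thd_le hrot hw a b)

lemma measure_solutions_fiber_fst_thd_le [SFinite σ] (hrot : ∀ O : E ≃ₗᵢ[ℝ] E, σ.map O = σ)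
    (hw : ‖w‖ = 1) {b : E} (hb : ‖b‖ = 1) :
    σ.prod σ {q | ((q.1, b), q.2) ∈ solutions c c' ε} ≤
      σ (innerBand c ε w) * σ (innerBand c' ε w) := by
  rw [← measure_innerBand_eq hrot hb hw]
  refine Measure.prod_le_mul_of_section_le _ _ (measurableSet_innerBand c ε b)
    ((measurableSet_solutions c c' ε).preimage (by fun_prop)) (fun q hq => ⟨?_, trivial⟩)
    (ae_of_all _ fun a _ => measure_solutions_fiber_thd_le hrot hw a b)
  simpa [innerBand, real_inner_comm] using hq.1.2

lemma measure_solutions_fiber_fst_snd_le [IsProbabilityMeasure σ]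
    (hrot : ∀ O : E ≃ₗᵢ[ℝ] E, σ.map O = σ) (hsph : ∀ᵐ z ∂σ, ‖z‖ = 1) (hw : ‖w‖ = 1) {z : E}
    (hz : ‖z‖ = 1) :
    σ.prod σ {q | (q, z) ∈ solutions c c' ε} ≤ σ (innerBand c ε w) * σ (innerBand c' ε w) := by
  -- rotating `z'` to `z` shows that all fibers over unit vectors have the same mass
  have hfiber (z' : E) (hz' : ‖z'‖ = 1) :
      σ.prod σ {q | (q, z') ∈ solutions c c' ε} = σ.prod σ {q | (q, z) ∈ solutions c c' ε} := by
    obtain ⟨O, hO⟩ := exists_linearIsometryEquiv_apply_eq (hz'.trans hz.symm)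
    have hOO : (σ.prod σ).map (Prod.map O O) = σ.prod σ := by
      rw [← Measure.map_prod_map _ _ O.continuous.measurable O.continuous.measurable, hrot]
    have hS : MeasurableSet {q : E × E | (q, z) ∈ solutions c c' ε} :=
      (measurableSet_solutions c c' ε).preimage (measurable_id.prodMk measurable_const)
    conv_rhs => rw [← hOO, Measure.map_apply (O.continuous.measurable.prodMap
      O.continuous.measurable) hS]
    congr 1
    ext q
    rw [← hO]
    exact (map_mem_solutions O).symm
  calc σ.prod σ {q | (q, z) ∈ solutions c c' ε}
      = ∫⁻ z', σ.prod σ {q | (q, z') ∈ solutions c c' ε} ∂σ := by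
        rw [lintegral_congr_ae (hsph.mono hfiber), lintegral_const, measure_univ, mul_one]
    _ = (σ.prod σ).prod σ (solutions c c' ε) :=
        (Measure.prod_apply_symm (measurableSet_solutions c c' ε)).symm
    _ ≤ _ := measure_solutions_le hrot hsph hw

end SphereMeasure

section Triples

variable {ι α : Type*}

def tripleAt (y : ι → α) (t : ι × ι × ι) : (α × α) × α := ((y t.1, y t.2.1), y t.2.2)

noncomputable def indexSet (t : ι × ι × ι) : Finset ι := {t.1, t.2.1, t.2.2}

/-- With `χ` the indicator of `T`, the three terms dominate the bounds `1`, `p + q` and `p q` on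
the conditional probability of `A_s` when `s` has all three, two, or one of its indices in `T`. -/
noncomputable def overlapWeight (p q : ℝ) (T : Finset ι) (s : ι × ι × ι) : ℝ :=
  let χ i := if i ∈ T then (1 : ℝ) else 0
  χ s.1 * χ s.2.1 * χ s.2.2 +
    (p + q) * (χ s.1 * χ s.2.1 + χ s.1 * χ s.2.2 + χ s.2.1 * χ s.2.2) +
    p * q * (χ s.1 + χ s.2.1 + χ s.2.2)

lemma overlapWeight_nonneg {p q : ℝ} (hp : 0 ≤ p) (hq : 0 ≤ q) (T : Finset ι) (s : ι × ι × ι) :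
    0 ≤ overlapWeight p q T s := by
  simp only [overlapWeight]
  split_ifs <;> positivity

lemma sum_triple_mul {R : Type*} [CommSemiring R] [Fintype ι] (f g h : ι → R) :
    ∑ s : ι × ι × ι, f s.1 * g s.2.1 * h s.2.2 = (∑ i, f i) * (∑ i, g i) * ∑ i, h i := by
  simp only [Fintype.sum_prod_type, ← Finset.mul_sum, ← Finset.sum_mul]

open Finset in
lemma sum_overlapWeight [Fintype ι] (p q : ℝ) (T : Finset ι) :
    ∑ s : ι × ι × ι, overlapWeight p q T s =
      (#T : ℝ) ^ 3 + 3 * (p + q) * (#T : ℝ) ^ 2 * Fintype.card ι +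
        3 * p * q * #T * (Fintype.card ι : ℝ) ^ 2 := by
  set χ : ι → ℝ := fun i => if i ∈ T then 1 else 0
  have hχ : ∑ i, χ i = #T := by simp [χ]
  have h1 : ∑ _i : ι, (1 : ℝ) = Fintype.card ι := by simp
  have e := sum_triple_mul χ χ χ
  have e1 := sum_triple_mul χ χ 1
  have e2 := sum_triple_mul χ 1 χ
  have e3 := sum_triple_mul 1 χ χ
  have e4 := sum_triple_mul χ 1 1
  have e5 := sum_triple_mul 1 χ 1
  have e6 := sum_triple_mul 1 1 χ
  simp only [Pi.one_apply, mul_one, one_mul, hχ, h1] at e e1 e2 e3 e4 e5 e6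
  simp only [overlapWeight, Finset.sum_add_distrib, ← Finset.mul_sum]
  rw [e, e1, e2, e3, e4, e5, e6]
  ring

open Finset in
lemma sum_overlapWeight_le [Fintype ι] {p q : ℝ} (hp : 0 ≤ p) (hq : 0 ≤ q) {T : Finset ι}
    (hT : #T ≤ 3) :
    ∑ s : ι × ι × ι, overlapWeight p q T s ≤
      27 * (1 + (p + q) * Fintype.card ι + p * q * (Fintype.card ι : ℝ) ^ 2) := by
  have hk : (#T : ℝ) ≤ 3 := by exact_mod_cast hT
  rw [sum_overlapWeight]
  calc (#T : ℝ) ^ 3 + 3 * (p + q) * (#T : ℝ) ^ 2 * Fintype.card ι +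
        3 * p * q * #T * (Fintype.card ι : ℝ) ^ 2
      = (#T : ℝ) ^ 3 + (p + q) * Fintype.card ι * (3 * (#T : ℝ) ^ 2) +
          p * q * (Fintype.card ι : ℝ) ^ 2 * (3 * #T) := by ring
    _ ≤ 27 + (p + q) * Fintype.card ι * 27 + p * q * (Fintype.card ι : ℝ) ^ 2 * 27 := by
        gcongr <;> nlinarith [pow_le_pow_left₀ (Nat.cast_nonneg _) hk 3]
    _ = _ := by ring

end Triples

section Sampling

variable {E Ω ι : Type*} [MeasurableSpace E] [MeasurableSpace Ω] {σ : Measure E}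
  {μ : Measure Ω} [IsFiniteMeasure μ] {x : ι → Ω → E}

lemma measurePreserving_pair (hx : ∀ i, MeasurePreserving (x i) μ σ) (hind : iIndepFun x μ)
    {i j : ι} (hij : i ≠ j) : MeasurePreserving (fun ω => (x i ω, x j ω)) μ (σ.prod σ) := by
  refine ⟨(hx i).measurable.prodMk (hx j).measurable, ?_⟩
  rw [(indepFun_iff_map_prod_eq_prod_map_map (hx i).measurable.aemeasurable
    (hx j).measurable.aemeasurable).1 (hind.indepFun hij), (hx i).map_eq, (hx j).map_eq]

lemma measurePreserving_tripleAt (hx : ∀ i, MeasurePreserving (x i) μ σ)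
    (hind : iIndepFun x μ) {t : ι × ι × ι} (h12 : t.1 ≠ t.2.1) (h13 : t.1 ≠ t.2.2)
    (h23 : t.2.1 ≠ t.2.2) :
    MeasurePreserving (fun ω => tripleAt (fun i => x i ω) t) μ ((σ.prod σ).prod σ) := by
  have hxm i := (hx i).measurable
  refine ⟨((hxm _).prodMk (hxm _)).prodMk (hxm _), ?_⟩
  change μ.map (fun ω => ((x t.1 ω, x t.2.1 ω), x t.2.2 ω)) = _
  rw [(indepFun_iff_map_prod_eq_prod_map_map ((hxm _).prodMk (hxm _)).aemeasurable
    (hxm _).aemeasurable).1 (hind.indepFun_prodMk hxm _ _ _ h13 h23),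
    (measurePreserving_pair hx hind h12).map_eq, (hx _).map_eq]

end Sampling

section Events

variable {E Ω ι : Type*} [NormedAddCommGroup E] [InnerProductSpace ℝ E] {x : ι → Ω → E}
  {c c' ε : ℝ}

def solutionEvent (x : ι → Ω → E) (c c' ε : ℝ) (t : ι × ι × ι) : Set Ω :=
  {ω | (t.1 ≠ t.2.1 ∧ t.1 ≠ t.2.2 ∧ t.2.1 ≠ t.2.2) ∧
    tripleAt (fun i => x i ω) t ∈ solutions c c' ε}

lemma solutionEvent_of_distinct {r : ι × ι × ι} (hr : r.1 ≠ r.2.1 ∧ r.1 ≠ r.2.2 ∧ r.2.1 ≠ r.2.2) :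
    solutionEvent x c c' ε r = {ω | tripleAt (fun i => x i ω) r ∈ solutions c c' ε} := by
  simp [solutionEvent, hr]

variable [MeasurableSpace E] [BorelSpace E] [SecondCountableTopology E] [MeasurableSpace Ω]
  {σ : Measure E} {μ : Measure Ω} [IsFiniteMeasure μ]

lemma measurableSet_solutionEvent (hxm : ∀ i, Measurable (x i)) (t : ι × ι × ι) :
    MeasurableSet (solutionEvent x c c' ε t) :=
  (MeasurableSet.const _).inter ((measurableSet_solutions c c' ε).preimage
    (((hxm _).prodMk (hxm _)).prodMk (hxm _)))

lemma measure_solutionEvent_inter_le [Fintype ι] (hx : ∀ i, MeasurePreserving (x i) μ σ)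
    (hind : iIndepFun x μ) {t s : ι × ι × ι} (ht : t.1 ≠ t.2.1 ∧ t.1 ≠ t.2.2 ∧ t.2.1 ≠ t.2.2)
    (hs : s.1 ≠ s.2.1 ∧ s.1 ≠ s.2.2 ∧ s.2.1 ≠ s.2.2) {K : ℝ≥0∞}
    (hK : ∀ᵐ ω ∂μ, μ {ω' | tripleAt ((indexSet t).piecewise (fun i => x i ω) (fun i => x i ω')) s
      ∈ solutions c c' ε} ≤ K) :
    μ (solutionEvent x c c' ε t ∩ solutionEvent x c c' ε s) ≤ μ (solutionEvent x c c' ε t) * K := by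
  have hmeas (r : ι × ι × ι) : MeasurableSet {y : ι → E | tripleAt y r ∈ solutions c c' ε} :=
    (measurableSet_solutions c c' ε).preimage (by unfold tripleAt; fun_prop)
  rw [solutionEvent_of_distinct ht, solutionEvent_of_distinct hs]
  refine iIndepFun.measure_inter_le_of_piecewise (fun i => (hx i).measurable) hind (indexSet t)
    (hmeas t) (hmeas s) (fun y y' hyy' hy => ?_) (hK.mono fun _ h _ => h)
  simpa [tripleAt, hyy' t.1 (by simp [indexSet]), hyy' t.2.1 (by simp [indexSet]),
    hyy' t.2.2 (by simp [indexSet])] using hy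

end Events

section Covariance

variable {E : Type*} [NormedAddCommGroup E] [InnerProductSpace ℝ E]
  [MeasurableSpace E] [BorelSpace E] [SecondCountableTopology E]
  {σ : Measure E} [IsProbabilityMeasure σ] {c c' ε : ℝ} {w : E}
  {Ω ι : Type*} [MeasurableSpace Ω] {μ : Measure Ω} [IsProbabilityMeasure μ] {x : ι → Ω → E}

lemma measure_piecewise_solutions_le (hrot : ∀ O : E ≃ₗᵢ[ℝ] E, σ.map O = σ)
    (hsph : ∀ᵐ z ∂σ, ‖z‖ = 1) (hw : ‖w‖ = 1) (hx : ∀ i, MeasurePreserving (x i) μ σ)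
    (hind : iIndepFun x μ) {T : Finset ι} {y : ι → E} (hy : ∀ i, ‖y i‖ = 1)
    {s : ι × ι × ι} (h12 : s.1 ≠ s.2.1) (h13 : s.1 ≠ s.2.2) (h23 : s.2.1 ≠ s.2.2)
    (hsT : s.1 ∈ T ∨ s.2.1 ∈ T ∨ s.2.2 ∈ T) :
    (μ {ω | tripleAt (T.piecewise y (fun i => x i ω)) s ∈ solutions c c' ε}).toReal ≤
      overlapWeight (σ (innerBand c ε w)).toReal (σ (innerBand c' ε w)).toReal T s := by
  have hsol := measurableSet_solutions (E := E) c c' ε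
  have hp : 0 ≤ (σ (innerBand c ε w)).toReal := ENNReal.toReal_nonneg
  have hq : 0 ≤ (σ (innerBand c' ε w)).toReal := ENNReal.toReal_nonneg
  have hpq := mul_nonneg hp hq
  have hPQ : (σ (innerBand c ε w) * σ (innerBand c' ε w)).toReal =
      (σ (innerBand c ε w)).toReal * (σ (innerBand c' ε w)).toReal := ENNReal.toReal_mul
  by_cases h1 : s.1 ∈ T <;> by_cases h2 : s.2.1 ∈ T <;> by_cases h3 : s.2.2 ∈ T <;>
    simp only [overlapWeight, tripleAt, h1, h2, h3, Finset.piecewise_eq_of_mem,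
      Finset.piecewise_eq_of_notMem, if_true, if_false, not_false_eq_true]
  · have : (μ {ω | ((y s.1, y s.2.1), y s.2.2) ∈ solutions c c' ε}).toReal ≤ 1 :=
      ENNReal.toReal_le_of_le_ofReal zero_le_one (by simpa using prob_le_one)
    nlinarith
  · refine ((hx s.2.2).toReal_measure_preimage_le (hsol.preimage (by fun_prop))
      (measure_solutions_fiber_thd_le hrot hw (y s.1) (y s.2.1)) (measure_ne_top _ _)).trans ?_
    nlinarith
  · refine ((hx s.2.1).toReal_measure_preimage_le (hsol.preimage (by fun_prop))
      (measure_solutions_fiber_snd_le hrot hw (hy s.1) (y s.2.2)) (measure_ne_top _ _)).trans ?_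
    nlinarith
  · refine ((measurePreserving_pair hx hind h23).toReal_measure_preimage_le
      (hsol.preimage (by fun_prop)) (measure_solutions_fiber_snd_thd_le hrot hw (hy s.1))
      (ENNReal.mul_ne_top (measure_ne_top _ _) (measure_ne_top _ _))).trans ?_
    nlinarith
  · refine ((hx s.1).toReal_measure_preimage_le (hsol.preimage (by fun_prop))
      (measure_solutions_fiber_fst_le hrot hw (hy s.2.1) (y s.2.2)) (measure_ne_top _ _)).trans ?_
    nlinarith
  · refine ((measurePreserving_pair hx hind h13).toReal_measure_preimage_le
      (hsol.preimage (by fun_prop)) (measure_solutions_fiber_fst_thd_le hrot hw (hy s.2.1))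
      (ENNReal.mul_ne_top (measure_ne_top _ _) (measure_ne_top _ _))).trans ?_
    nlinarith
  · refine ((measurePreserving_pair hx hind h12).toReal_measure_preimage_le
      (hsol.preimage (by fun_prop)) (measure_solutions_fiber_fst_snd_le hrot hsph hw (hy s.2.2))
      (ENNReal.mul_ne_top (measure_ne_top _ _) (measure_ne_top _ _))).trans ?_
    nlinarith
  · exact absurd hsT (by simp [h1, h2, h3])

lemma measureReal_solutionEvent_le (hrot : ∀ O : E ≃ₗᵢ[ℝ] E, σ.map O = σ)
    (hsph : ∀ᵐ z ∂σ, ‖z‖ = 1) (hw : ‖w‖ = 1) (hx : ∀ i, MeasurePreserving (x i) μ σ)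
    (hind : iIndepFun x μ) {t : ι × ι × ι} (ht : t.1 ≠ t.2.1 ∧ t.1 ≠ t.2.2 ∧ t.2.1 ≠ t.2.2) :
    μ.real (solutionEvent x c c' ε t) ≤
      (σ (innerBand c ε w)).toReal * (σ (innerBand c' ε w)).toReal := by
  rw [solutionEvent_of_distinct ht, ← ENNReal.toReal_mul]
  exact ENNReal.toReal_mono (ENNReal.mul_ne_top (measure_ne_top _ _) (measure_ne_top _ _))
    (((measurePreserving_tripleAt hx hind ht.1 ht.2.1 ht.2.2).measure_preimage
      (measurableSet_solutions c c' ε).nullMeasurableSet).trans_le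
        (measure_solutions_le hrot hsph hw))

lemma measureReal_solutionEvent_inter_sub_le [Fintype ι] (hrot : ∀ O : E ≃ₗᵢ[ℝ] E, σ.map O = σ)
    (hsph : ∀ᵐ z ∂σ, ‖z‖ = 1) (hw : ‖w‖ = 1) (hx : ∀ i, MeasurePreserving (x i) μ σ)
    (hind : iIndepFun x μ) (hunit : ∀ᵐ ω ∂μ, ∀ i, ‖x i ω‖ = 1) (t s : ι × ι × ι) :
    μ.real (solutionEvent x c c' ε t ∩ solutionEvent x c c' ε s) -
        μ.real (solutionEvent x c c' ε t) * μ.real (solutionEvent x c c' ε s) ≤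
      (σ (innerBand c ε w)).toReal * (σ (innerBand c' ε w)).toReal *
        overlapWeight (σ (innerBand c ε w)).toReal (σ (innerBand c' ε w)).toReal
          (indexSet t) s := by
  set p := (σ (innerBand c ε w)).toReal
  set q := (σ (innerBand c' ε w)).toReal
  have hW : 0 ≤ overlapWeight p q (indexSet t) s :=
    overlapWeight_nonneg ENNReal.toReal_nonneg ENNReal.toReal_nonneg _ _
  have hpqW : 0 ≤ p * q * overlapWeight p q (indexSet t) s :=
    mul_nonneg (mul_nonneg ENNReal.toReal_nonneg ENNReal.toReal_nonneg) hW
  by_cases ht : t.1 ≠ t.2.1 ∧ t.1 ≠ t.2.2 ∧ t.2.1 ≠ t.2.2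
  swap
  · simp [solutionEvent, ht, hpqW]
  by_cases hs : s.1 ≠ s.2.1 ∧ s.1 ≠ s.2.2 ∧ s.2.1 ≠ s.2.2
  swap
  · simp [solutionEvent, hs, hpqW]
  have hEt := measureReal_solutionEvent_le (c := c) (c' := c') (ε := ε) hrot hsph hw hx hind ht
  have hEs : 0 ≤ μ.real (solutionEvent x c c' ε s) := measureReal_nonneg
  by_cases hsT : s.1 ∈ indexSet t ∨ s.2.1 ∈ indexSet t ∨ s.2.2 ∈ indexSet t
  · have key := ENNReal.toReal_mono (ENNReal.mul_ne_top (measure_ne_top _ _)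
      ENNReal.ofReal_ne_top) (measure_solutionEvent_inter_le hx hind ht hs
        (K := ENNReal.ofReal (overlapWeight p q (indexSet t) s))
        (hunit.mono fun ω hω => (ENNReal.le_ofReal_iff_toReal_le (measure_ne_top _ _) hW).2
          (measure_piecewise_solutions_le hrot hsph hw hx hind hω hs.1 hs.2.1 hs.2.2 hsT)))
    rw [ENNReal.toReal_mul, ENNReal.toReal_ofReal hW, ← measureReal_def,
      ← measureReal_def] at key
    nlinarith [mul_le_mul_of_nonneg_right hEt hW,
      mul_nonneg (measureReal_nonneg (μ := μ) (s := solutionEvent x c c' ε t)) hEs]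
  · -- `s` avoids the indices of `t`: freezing them does not change the probability of `A_s`
    have hsec (ω : Ω) : μ {ω' | tripleAt ((indexSet t).piecewise (fun i => x i ω)
        (fun i => x i ω')) s ∈ solutions c c' ε} = μ (solutionEvent x c c' ε s) := by
      simp only [not_or] at hsT
      simp [solutionEvent_of_distinct hs, tripleAt, Finset.piecewise_eq_of_notMem, hsT]
    have key := ENNReal.toReal_mono (ENNReal.mul_ne_top (measure_ne_top _ _)
      (measure_ne_top _ _)) (measure_solutionEvent_inter_le hx hind ht hs
        (ae_of_all _ fun ω => (hsec ω).le))
    simp only [ENNReal.toReal_mul, ← measureReal_def] at key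
    linarith

lemma variance_sum_solutionEvent_le [Fintype ι] (hrot : ∀ O : E ≃ₗᵢ[ℝ] E, σ.map O = σ)
    (hsph : ∀ᵐ z ∂σ, ‖z‖ = 1) (hw : ‖w‖ = 1) (hx : ∀ i, MeasurePreserving (x i) μ σ)
    (hind : iIndepFun x μ) :
    Var[fun ω => ∑ t, (solutionEvent x c c' ε t).indicator 1 ω; μ] ≤
      27 * ((Fintype.card ι : ℝ) ^ 3 * (σ (innerBand c ε w)).toReal *
          (σ (innerBand c' ε w)).toReal +
        (Fintype.card ι : ℝ) ^ 4 * (σ (innerBand c ε w)).toReal ^ 2 *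
          (σ (innerBand c' ε w)).toReal +
        (Fintype.card ι : ℝ) ^ 4 * (σ (innerBand c ε w)).toReal *
          (σ (innerBand c' ε w)).toReal ^ 2 +
        (Fintype.card ι : ℝ) ^ 5 * (σ (innerBand c ε w)).toReal ^ 2 *
          (σ (innerBand c' ε w)).toReal ^ 2) := by
  set p := (σ (innerBand c ε w)).toReal
  set q := (σ (innerBand c' ε w)).toReal
  set m : ℝ := (Fintype.card ι : ℝ)
  have hunit : ∀ᵐ ω ∂μ, ∀ i, ‖x i ω‖ = 1 :=
    ae_all_iff.2 fun i => (hx i).quasiMeasurePreserving.ae hsph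
  rw [variance_sum_indicator_one (measurableSet_solutionEvent fun i => (hx i).measurable)]
  calc _ ≤ ∑ t : ι × ι × ι, ∑ s : ι × ι × ι, p * q * overlapWeight p q (indexSet t) s :=
        Finset.sum_le_sum fun t _ => Finset.sum_le_sum fun s _ =>
          measureReal_solutionEvent_inter_sub_le hrot hsph hw hx hind hunit t s
    _ ≤ ∑ _t : ι × ι × ι, p * q * (27 * (1 + (p + q) * m + p * q * m ^ 2)) :=
        Finset.sum_le_sum fun t _ => by
          rw [← Finset.mul_sum]
          exact mul_le_mul_of_nonneg_left (sum_overlapWeight_le ENNReal.toReal_nonneg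
            ENNReal.toReal_nonneg Finset.card_le_three) (by positivity)
    _ = _ := by
        simp only [Finset.sum_const, Finset.card_univ, Fintype.card_prod, nsmul_eq_mul]
        push_cast
        ring

end Covariance

end ThreeList

/-- Second-moment bound for the number `Z` of ordered solution triples of the 3-list problem:
there is an absolute constant `C > 0` such that
`Var(Z) ≤ C·(m³pp′ + m⁴p²p′ + m⁴pp′² + m⁵p²p′²)`. -/
theorem variance_of_number_of_triples :
    ∃ C : ℝ, 0 < C ∧
      ∀ (d m : ℕ), 2 ≤ d → 3 ≤ m →
      ∀ (θ θ' ε : ℝ), 0 ≤ ε →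
      ∀ (σ : Measure (EuclideanSpace ℝ (Fin d))), IsUniformSphereMeasure d σ →
      ∀ (u : EuclideanSpace ℝ (Fin d)), ‖u‖ = 1 →
      ∀ (p p' : ℝ),
        p = ((σ.prod σ) {q : EuclideanSpace ℝ (Fin d) × EuclideanSpace ℝ (Fin d) |
          ‖q.1‖ = 1 ∧ ‖q.2‖ = 1 ∧ |⟪q.1, q.2⟫ - Real.cos θ| ≤ ε}).toReal →
        p' = (σ {z | ‖z‖ = 1 ∧ |⟪z, u⟫ - Real.cos θ'| ≤ ε}).toReal →
      ∀ (Ω : Type) (_ : MeasurableSpace Ω) (μ : Measure Ω), IsProbabilityMeasure μ →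
      ∀ (x : Fin m → Ω → EuclideanSpace ℝ (Fin d)),
        (∀ i, Measurable (x i)) →
        (∀ i, Measure.map (x i) μ = σ) →
        iIndepFun x μ →
        variance (fun ω => ((Finset.univ.filter (fun t : Fin m × Fin m × Fin m =>
            t.1 ≠ t.2.1 ∧ t.1 ≠ t.2.2 ∧ t.2.1 ≠ t.2.2 ∧
            x t.1 ω ≠ x t.2.1 ω ∧
            |⟪x t.1 ω, x t.2.1 ω⟫ - Real.cos θ| ≤ ε ∧
            |⟪‖x t.1 ω - x t.2.1 ω‖⁻¹ • (x t.1 ω - x t.2.1 ω), x t.2.2 ω⟫ - Real.cos θ'| ≤ ε)).card : ℝ)) μ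
          ≤ C * ((m : ℝ) ^ 3 * p * p' + (m : ℝ) ^ 4 * p ^ 2 * p' +
              (m : ℝ) ^ 4 * p * p' ^ 2 + (m : ℝ) ^ 5 * p ^ 2 * p' ^ 2) := by
  refine ⟨27, by norm_num, ?_⟩
  intro d m _ _ θ θ' ε _ σ ⟨_, hsphere, hrot⟩ u hu p p' hp hp' Ω _ μ _ x hxm hxd hind
  have hsph : ∀ᵐ z ∂σ, ‖z‖ = 1 := by
    have : ∀ᵐ z ∂σ, z ∈ Metric.sphere 0 1 :=
      mem_ae_iff.2 ((prob_compl_eq_zero_iff Metric.isClosed_sphere.measurableSet).2 hsphere)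
    exact this.mono fun z hz => mem_sphere_zero_iff_norm.1 hz
  rw [hp, hp', ThreeList.measure_prod_unit_inner_eq hrot hsph hu,
    ThreeList.measure_unit_inner_eq hsph]
  convert ThreeList.variance_sum_solutionEvent_le (c := Real.cos θ) (c' := Real.cos θ') (ε := ε)
    hrot hsph hu (fun i => ⟨hxm i, hxd i⟩) hind using 3
  · rw [Finset.card_filter]
    push_cast
    refine Finset.sum_congr rfl fun t _ => ?_
    simp [Set.indicator_apply, ThreeList.solutionEvent, ThreeList.tripleAt,
      ThreeList.solutions, ThreeList.goodPairs, ThreeList.innerBand, ThreeList.unitDiff, and_assoc]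
  all_goals simp
end
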